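/- arXiv:2307.08824 — 5 statements merged into one kernel-verified Lean document; each statement's English description precedes it below -/
import Mathlib

section
/- Let G = (A,B,C;E) be a bilaterally-complete tripartite graph with complete sides G[A∪B] and G[A∪C] and |A| = p. Then there exist pairwise disjoint matchings M_1, …, M_k in G[B∪C] with k ≤ p and |M_1| + ⋯ + |M_k| = τ△(G). -/
open SimpleGraph

variable {V : Type*}

/-- The set of edges of a triangle, given by its vertex set `t`:
all unordered pairs of distinct vertices of `t`. -/
def triangleEdges (t : Finset V) : Set (Sym2 V) :=
  {e | ∃ u ∈ t, ∃ v ∈ t, u ≠ v ∧ e = s(u, v)}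

/-- `E'` is a `𝒯`-transversal of `G`: a set of edges of `G` meeting every triangle of `G`. -/
def IsTriTransversal (G : SimpleGraph V) (E' : Set (Sym2 V)) : Prop :=
  E' ⊆ G.edgeSet ∧ ∀ t : Finset V, G.IsNClique 3 t → ∃ e ∈ triangleEdges t, e ∈ E'

/-- `τ△ G`: the minimum cardinality of a `𝒯`-transversal of `G`. -/
noncomputable def triTransversalNum (G : SimpleGraph V) : ℕ :=
  sInf {n | ∃ E' : Set (Sym2 V), IsTriTransversal G E' ∧ E'.ncard = n}

/-- `P` is a packing in `G`: a set of triangles of `G` that are pairwise edge-disjoint. -/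
def IsTriPacking (G : SimpleGraph V) (P : Set (Finset V)) : Prop :=
  (∀ t ∈ P, G.IsNClique 3 t) ∧
    P.Pairwise fun t t' => Disjoint (triangleEdges t) (triangleEdges t')

/-- `ν△ G`: the maximum cardinality of a packing of triangles in `G`. -/
noncomputable def triPackingNum (G : SimpleGraph V) : ℕ :=
  sSup {n | ∃ P : Set (Finset V), IsTriPacking G P ∧ P.ncard = n}

/-- The set of edges of `G` with one endpoint in `M` and the other in `W`. -/
def edgesBetween (G : SimpleGraph V) (M W : Set V) : Set (Sym2 V) :=
  {e | e ∈ G.edgeSet ∧ ∃ u ∈ M, ∃ w ∈ W, e = s(u, w)}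

/-- `G` is tripartite with parts `A`, `B`, `C`: the vertex set is partitioned into
the three independent sets `A`, `B`, `C`. -/
def IsTripartition (G : SimpleGraph V) (A B C : Set V) : Prop :=
  A ∪ B ∪ C = Set.univ ∧ Disjoint A B ∧ Disjoint A C ∧ Disjoint B C ∧
    (∀ u ∈ A, ∀ v ∈ A, ¬G.Adj u v) ∧ (∀ u ∈ B, ∀ v ∈ B, ¬G.Adj u v) ∧
    (∀ u ∈ C, ∀ v ∈ C, ¬G.Adj u v)

/-- The side `G[X ∪ Y]` of a tripartite graph is a complete bipartite graph. -/
def CompleteSide (G : SimpleGraph V) (X Y : Set V) : Prop :=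
  ∀ x ∈ X, ∀ y ∈ Y, G.Adj x y

/-- `W` is a vertex cover of the subgraph edge-induced by the edge set `Y`. -/
def CoversEdges (W : Set V) (Y : Set (Sym2 V)) : Prop :=
  ∀ e ∈ Y, ∃ v ∈ W, v ∈ e

/-- `M` is a matching consisting of edges from the edge set `F`:
the edges of `M` are pairwise vertex-disjoint. -/
def IsMatchingIn (F : Set (Sym2 V)) (M : Set (Sym2 V)) : Prop :=
  M ⊆ F ∧ M.Pairwise fun e f => ∀ v, v ∈ e → v ∉ f


/-!
Let `F` be the set of `B`–`C` edges, `p = |A|`, and let `H ⊆ F` be as large as possible subject to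
every vertex having `H`-degree at most `p`. By König's edge colouring theorem `H` splits into `p`
matchings, so it suffices to show `τ△(G) = |H|`.

Every triangle is `abc` with `a ∈ A`, `b ∈ B`, `c ∈ C`. A transversal `E` contains `ab` or `ac`
for every `a ∈ A` and every `bc ∈ H \ E`; as a vertex lies on at most `p` edges of `H`, at least
`|H \ E| / p` edges of `E` meet `a`, and summing over the `p` vertices of `A` gives `|E| ≥ |H|`.
Conversely, alternating paths from the vertices of `B` of `H`-degree below `p` produce
`W ⊆ B ∪ C` with `|H| = p |W| + |F - W|`, where `F - W` are the edges of `F` avoiding `W`; these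
edges together with all edges `aw`, `a ∈ A`, `w ∈ W`, form a transversal of size `|H|`.
-/

open Finset

section EdgeFinsets

def AgreeAt (K H : Finset (Sym2 V)) (v : V) : Prop := ∀ e, v ∈ e → (e ∈ K ↔ e ∈ H)

def IsCrossing (X Y : Set V) (F : Finset (Sym2 V)) : Prop := ∀ e ∈ F, ∃ x ∈ X, ∃ y ∈ Y, e = s(x, y)

variable {F H K : Finset (Sym2 V)} {X Y : Set V} {e : Sym2 V} {u v : V}

lemma IsCrossing.symm (h : IsCrossing X Y F) : IsCrossing Y X F := by
  intro e he
  obtain ⟨x, hx, y, hy, rfl⟩ := h e he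
  exact ⟨y, hy, x, hx, Sym2.eq_swap⟩

lemma IsCrossing.mono (h : IsCrossing X Y F) (hHF : H ⊆ F) : IsCrossing X Y H :=
  fun e he => h e (hHF he)

lemma IsCrossing.exists_eq_mk (h : IsCrossing X Y F) (hXY : Disjoint X Y) (he : e ∈ F) (hv : v ∈ e)
    (hvX : v ∈ X) : ∃ y ∈ Y, e = s(v, y) := by
  obtain ⟨x, hx, y, hy, rfl⟩ := h e he
  rcases Sym2.mem_iff.1 hv with rfl | rfl
  · exact ⟨y, hy, rfl⟩
  · exact absurd hvX (hXY.notMem_of_mem_right hy)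

variable [DecidableEq V]

def edgeDeg (H : Finset (Sym2 V)) (v : V) : ℕ := #{e ∈ H | v ∈ e}

lemma AgreeAt.edgeDeg_eq (h : AgreeAt K H v) : edgeDeg K v = edgeDeg H v := by
  unfold edgeDeg
  congr 1
  ext f
  simp only [mem_filter]
  exact ⟨fun ⟨hf, hv⟩ => ⟨(h f hv).1 hf, hv⟩, fun ⟨hf, hv⟩ => ⟨(h f hv).2 hf, hv⟩⟩

lemma AgreeAt.insert_left (h : AgreeAt K H u) (hu : u ∉ e) : AgreeAt (insert e K) H u := by
  intro f hf
  rw [mem_insert, ← h f hf]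
  exact or_iff_right fun hfe => hu (hfe ▸ hf)

lemma AgreeAt.erase_left (h : AgreeAt K H u) (hu : u ∉ e) : AgreeAt (K.erase e) H u := by
  intro f hf
  rw [mem_erase, ← h f hf]
  exact and_iff_right fun hfe => hu (hfe ▸ hf)

lemma edgeDeg_insert_of_mem (he : e ∉ H) (hv : v ∈ e) :
    edgeDeg (insert e H) v = edgeDeg H v + 1 := by
  rw [edgeDeg, filter_insert, if_pos hv, card_insert_of_notMem (by simp [he])]
  rfl

lemma edgeDeg_insert_of_notMem (hv : v ∉ e) : edgeDeg (insert e H) v = edgeDeg H v := by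
  rw [edgeDeg, filter_insert, if_neg hv]
  rfl

lemma edgeDeg_erase_add_one (he : e ∈ H) (hv : v ∈ e) :
    edgeDeg (H.erase e) v + 1 = edgeDeg H v := by
  rw [edgeDeg, filter_erase, card_erase_add_one (mem_filter.2 ⟨he, hv⟩)]
  rfl

lemma edgeDeg_mono (h : H ⊆ K) (v : V) : edgeDeg H v ≤ edgeDeg K v :=
  card_le_card (filter_subset_filter _ h)

lemma one_le_edgeDeg (he : e ∈ H) (hv : v ∈ e) : 1 ≤ edgeDeg H v :=
  card_pos.2 ⟨e, mem_filter.2 ⟨he, hv⟩⟩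

lemma card_le_sum_edgeDeg {S : Finset V} (hS : CoversEdges (S : Set V) (H : Set (Sym2 V))) :
    #H ≤ ∑ v ∈ S, edgeDeg H v := by
  refine (card_le_card fun e he => ?_).trans card_biUnion_le
  obtain ⟨v, hv, hve⟩ := hS e he
  exact mem_biUnion.2 ⟨v, hv, mem_filter.2 ⟨he, hve⟩⟩

lemma sum_edgeDeg_eq_card {W : Finset V}
    (hW : ∀ e ∈ H, ∀ w ∈ W, ∀ w' ∈ W, w ∈ e → w' ∈ e → w = w') :
    ∑ w ∈ W, edgeDeg H w = #{e ∈ H | ∃ w ∈ W, w ∈ e} := by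
  unfold edgeDeg
  rw [← card_biUnion]
  · congr 1
    ext e
    simp only [mem_biUnion, mem_filter]
    exact ⟨fun ⟨w, hw, he, hwe⟩ => ⟨he, w, hw, hwe⟩, fun ⟨he, w, hw, hwe⟩ => ⟨w, hw, he, hwe⟩⟩
  · intro w hw w' hw' hne
    refine disjoint_left.2 fun e he he' => hne ?_
    simp only [mem_filter] at he he'
    exact hW e he.1 w hw w' hw' he.2 he'.2

end EdgeFinsets

section Matchings

def IsMatching (M : Finset (Sym2 V)) : Prop :=
  (M : Set (Sym2 V)).Pairwise fun e f => ∀ v ∈ e, v ∉ f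

def Misses (M : Finset (Sym2 V)) (v : V) : Prop := ∀ e ∈ M, v ∉ e

variable {M N : Finset (Sym2 V)} {e f : Sym2 V} {v : V}

lemma IsMatching.subset (hM : IsMatching M) (h : N ⊆ M) : IsMatching N :=
  hM.mono (coe_subset.2 h)

lemma IsMatching.eq_of_mem (hM : IsMatching M) (he : e ∈ M) (hf : f ∈ M) (hve : v ∈ e)
    (hvf : v ∈ f) : e = f := by
  by_contra hne
  exact hM he hf hne v hve hvf

variable [DecidableEq V]

lemma IsMatching.insert (hM : IsMatching M) {x y : V} (hx : Misses M x) (hy : Misses M y) :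
    IsMatching (insert s(x, y) M) := by
  have hxy : ∀ f ∈ M, ∀ v ∈ s(x, y), v ∉ f := by
    intro f hf v hv
    rcases Sym2.mem_iff.1 hv with rfl | rfl
    exacts [hx f hf, hy f hf]
  rw [IsMatching, coe_insert, Set.pairwise_insert]
  exact ⟨hM, fun f hf _ => ⟨hxy f hf, fun v hvf hv => hxy f hf v hv hvf⟩⟩

lemma IsMatching.misses_erase (hM : IsMatching M) (he : e ∈ M) (hv : v ∈ e) :
    Misses (M.erase e) v := fun _ hf hvf =>
  ne_of_mem_erase hf (hM.eq_of_mem (mem_of_mem_erase hf) he hvf hv)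

lemma misses_insert {u : V} : Misses (insert e M) u ↔ u ∉ e ∧ Misses M u := by
  simp [Misses]

end Matchings

section KempeSwap

variable [DecidableEq V] {X Y : Set V} {M₁ M₂ N₁ N₂ : Finset (Sym2 V)} {v : V}

/-- `N₁, N₂` arise from the disjoint matchings `M₁, M₂` by exchanging them along the
`M₁`/`M₂`-alternating path that starts at `v ∈ X` with an edge of `M₁`. -/
structure IsKempeSwap (X Y : Set V) (M₁ M₂ N₁ N₂ : Finset (Sym2 V)) (v : V) : Prop where
  isMatching_left : IsMatching N₁
  isMatching_right : IsMatching N₂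
  disjoint : Disjoint N₁ N₂
  union_eq : N₁ ∪ N₂ = M₁ ∪ M₂
  misses_start : Misses N₁ v
  of_misses_of_mem_right : ∀ u ∈ Y, Misses M₁ u → Misses N₁ u ∧ AgreeAt N₂ M₂ u
  of_misses_of_mem_left : ∀ u ∈ X, u ≠ v → Misses M₂ u → Misses N₂ u ∧ AgreeAt N₁ M₁ u

lemma isKempeSwap_self (hM₁ : IsMatching M₁) (hM₂ : IsMatching M₂) (hdis : Disjoint M₁ M₂)
    (hv : Misses M₁ v) : IsKempeSwap X Y M₁ M₂ M₁ M₂ v :=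
  ⟨hM₁, hM₂, hdis, rfl, hv, fun _ _ hu => ⟨hu, fun _ _ => Iff.rfl⟩,
    fun _ _ _ hu => ⟨hu, fun _ _ => Iff.rfl⟩⟩

/-- One step of the exchange: `s(v, a)` moves from the first matching to the second, and the
rest of the path, which starts at `a`, is exchanged with the roles of `X` and `Y` reversed. -/
lemma IsKempeSwap.cons {a : V} (hXY : Disjoint X Y) (hM₁ : IsMatching M₁) (hv : v ∈ X)
    (ha : a ∈ Y) (he : s(v, a) ∈ M₁) (hv₂ : Misses M₂ v)
    (h : IsKempeSwap Y X M₂ (M₁.erase s(v, a)) N₁ N₂ a) :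
    IsKempeSwap X Y M₁ M₂ N₂ (insert s(v, a) N₁) v := by
  have hnot : ∀ {u}, u ≠ v → u ≠ a → u ∉ s(v, a) := fun h₁ h₂ hu => by
    rcases Sym2.mem_iff.1 hu with rfl | rfl <;> contradiction
  obtain ⟨hvN₁, hvN₂⟩ := h.of_misses_of_mem_right v hv hv₂
  have heN₂ : s(v, a) ∉ N₂ := fun heN => notMem_erase _ _ ((hvN₂ _ (Sym2.mem_mk_left v a)).1 heN)
  refine ⟨h.isMatching_right, h.isMatching_left.insert hvN₁ h.misses_start,
    disjoint_insert_right.2 ⟨heN₂, h.disjoint.symm⟩, ?_, ?_, ?_, ?_⟩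
  · rw [union_insert, union_comm, h.union_eq, union_comm, ← insert_union, insert_erase he]
  · intro f hf hvf
    exact hM₁.misses_erase he (Sym2.mem_mk_left v a) f ((hvN₂ f hvf).1 hf) hvf
  · intro u hu hu₁
    have hua : u ≠ a := fun hua => hu₁ _ he (hua ▸ Sym2.mem_mk_right v a)
    have huv : u ≠ v := fun huv => hXY.notMem_of_mem_left hv (huv ▸ hu)
    obtain ⟨huN₂, huN₁⟩ :=
      h.of_misses_of_mem_left u hu hua fun f hf => hu₁ f (mem_of_mem_erase hf)
    exact ⟨huN₂, huN₁.insert_left (hnot huv hua)⟩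
  · intro u hu huv hu₂
    have hua : u ≠ a := fun hua => hXY.notMem_of_mem_left hu (hua ▸ ha)
    obtain ⟨huN₁, huN₂⟩ := h.of_misses_of_mem_right u hu hu₂
    refine ⟨misses_insert.2 ⟨hnot huv hua, huN₁⟩, fun f hf => ?_⟩
    rw [huN₂ f hf, mem_erase]
    exact and_iff_right fun (hfe : f = s(v, a)) => hnot huv hua (hfe ▸ hf)

lemma exists_isKempeSwap (hXY : Disjoint X Y) (hM₁ : IsMatching M₁) (hM₂ : IsMatching M₂)
    (hdis : Disjoint M₁ M₂) (hX₁ : IsCrossing X Y M₁) (hX₂ : IsCrossing X Y M₂) (hv : v ∈ X)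
    (hv₂ : Misses M₂ v) : ∃ N₁ N₂, IsKempeSwap X Y M₁ M₂ N₁ N₂ v := by
  induction hn : #M₁ + #M₂ using Nat.strong_induction_on generalizing X Y M₁ M₂ v with
  | _ n ih =>
  by_cases hv₁ : Misses M₁ v
  · exact ⟨M₁, M₂, isKempeSwap_self hM₁ hM₂ hdis hv₁⟩
  obtain ⟨e, he, hve⟩ : ∃ e ∈ M₁, v ∈ e := by simpa [Misses] using hv₁
  obtain ⟨a, ha, rfl⟩ := hX₁.exists_eq_mk hXY he hve hv
  have hlt : #M₂ + #(M₁.erase s(v, a)) < n := by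
    rw [card_erase_of_mem he, ← hn]
    have := card_pos.2 ⟨_, he⟩
    omega
  obtain ⟨N₁, N₂, h⟩ := ih _ hlt hXY.symm hM₂ (hM₁.subset (erase_subset _ _))
    (disjoint_of_subset_right (erase_subset _ _) hdis.symm) hX₂.symm
    (hX₁.mono (erase_subset _ _)).symm ha (hM₁.misses_erase he (Sym2.mem_mk_right v a)) rfl
  exact ⟨N₂, _, h.cons hXY hM₁ hv ha he hv₂⟩

end KempeSwap

section Exchange

variable {α ι : Type*} [DecidableEq ι] {M : ι → Finset α} {N₁ N₂ : Finset α} {i j k : ι}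

lemma update_update_of_ne (hki : k ≠ i) (hkj : k ≠ j) :
    Function.update (Function.update M i N₁) j N₂ k = M k := by
  simp [hki, hkj]

variable [DecidableEq α]

lemma update_update_subset (hij : i ≠ j) (hunion : N₁ ∪ N₂ = M i ∪ M j) (hk : k = i ∨ k = j) :
    Function.update (Function.update M i N₁) j N₂ k ⊆ M i ∪ M j := by
  rw [← hunion]
  rcases hk with rfl | rfl
  · simp [hij]
  · simp

lemma pairwise_disjoint_update_update (hM : Pairwise fun k l => Disjoint (M k) (M l))
    (hij : i ≠ j) (hN : Disjoint N₁ N₂) (hunion : N₁ ∪ N₂ = M i ∪ M j) :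
    Pairwise fun k l => Disjoint (Function.update (Function.update M i N₁) j N₂ k)
      (Function.update (Function.update M i N₁) j N₂ l) := by
  set M' := Function.update (Function.update M i N₁) j N₂
  have hswapped : ∀ k l, k ≠ l → (k = i ∨ k = j) → Disjoint (M' k) (M' l) := by
    intro k l hkl hk
    by_cases hl : l = i ∨ l = j
    · rcases hk with rfl | rfl <;> rcases hl with rfl | rfl
      exacts [absurd rfl hkl, by simpa [M', hkl] using hN,
        by simpa [M', hkl, hkl.symm] using hN.symm, absurd rfl hkl]
    · push Not at hl
      rw [show M' l = M l from update_update_of_ne hl.1 hl.2]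
      exact disjoint_of_subset_left (update_update_subset hij hunion hk)
        (disjoint_union_left.2 ⟨hM hl.1.symm, hM hl.2.symm⟩)
  intro k l hkl
  by_cases hk : k = i ∨ k = j
  · exact hswapped k l hkl hk
  by_cases hl : l = i ∨ l = j
  · exact (hswapped l k hkl.symm hl).symm
  push Not at hk hl
  simpa [M', update_update_of_ne hk.1 hk.2, update_update_of_ne hl.1 hl.2] using hM hkl

lemma biUnion_update_update [Fintype ι] (hij : i ≠ j) (hunion : N₁ ∪ N₂ = M i ∪ M j) :
    univ.biUnion (Function.update (Function.update M i N₁) j N₂) = univ.biUnion M := by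
  have hsplit : ∀ f : ι → Finset α, univ.biUnion f = (f i ∪ f j) ∪ (univ \ {i, j}).biUnion f := by
    intro f
    calc univ.biUnion f = ({i, j} ∪ (univ \ {i, j})).biUnion f := by
          rw [union_sdiff_of_subset (subset_univ _)]
      _ = (f i ∪ f j) ∪ (univ \ {i, j}).biUnion f := by
          rw [union_biUnion, biUnion_insert, singleton_biUnion]
  rw [hsplit, hsplit M]
  congr 1
  · simpa [hij] using hunion
  · refine biUnion_congr rfl fun k hk => ?_
    simp only [mem_sdiff, mem_insert, mem_singleton, not_or] at hk
    exact update_update_of_ne hk.2.1 hk.2.2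

end Exchange

section EdgeColoring

variable [DecidableEq V] {ι : Type*} [Fintype ι]

structure IsMatchingDecomp (H : Finset (Sym2 V)) (M : ι → Finset (Sym2 V)) : Prop where
  isMatching : ∀ i, IsMatching (M i)
  pairwiseDisjoint : Pairwise fun i j => Disjoint (M i) (M j)
  biUnion_eq : univ.biUnion M = H

namespace IsMatchingDecomp

variable {H N₁ N₂ : Finset (Sym2 V)} {M : ι → Finset (Sym2 V)} {v : V}

lemma subset (h : IsMatchingDecomp H M) (i : ι) : M i ⊆ H :=
  h.biUnion_eq ▸ subset_biUnion_of_mem M (mem_univ i)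

lemma sum_card_eq (h : IsMatchingDecomp H M) : ∑ i, #(M i) = #H := by
  rw [← h.biUnion_eq, card_biUnion fun i _ j _ hij => h.pairwiseDisjoint hij]

lemma edgeDeg_eq_sum (h : IsMatchingDecomp H M) (v : V) :
    edgeDeg H v = ∑ i, edgeDeg (M i) v := by
  rw [edgeDeg, ← h.biUnion_eq, filter_biUnion, card_biUnion fun i _ j _ hij =>
    disjoint_filter_filter (h.pairwiseDisjoint hij)]
  rfl

lemma exists_misses (h : IsMatchingDecomp H M) (hv : edgeDeg H v < Fintype.card ι) :
    ∃ i, Misses (M i) v := by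
  by_contra! hcov
  have hpos : ∀ i, 1 ≤ edgeDeg (M i) v := fun i => by
    obtain ⟨e, he, hve⟩ : ∃ e ∈ M i, v ∈ e := by simpa [Misses] using hcov i
    exact one_le_edgeDeg he hve
  have := sum_le_sum fun i (_ : i ∈ univ) => hpos i
  rw [← h.edgeDeg_eq_sum, sum_const, card_univ, smul_eq_mul, mul_one] at this
  omega

variable [DecidableEq ι]

lemma insert_edge (h : IsMatchingDecomp H M) {b c : V} (he : s(b, c) ∉ H) {i : ι}
    (hb : Misses (M i) b) (hc : Misses (M i) c) :
    IsMatchingDecomp (insert s(b, c) H) (Function.update M i (insert s(b, c) (M i))) := by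
  have hM : ∀ j, j ≠ i → Function.update M i (insert s(b, c) (M i)) j = M j :=
    fun j hj => Function.update_of_ne hj _ _
  have hdisj : ∀ j, j ≠ i → Disjoint (insert s(b, c) (M i)) (M j) := fun j hj =>
    disjoint_insert_left.2 ⟨fun hej => he (h.subset j hej), h.pairwiseDisjoint hj.symm⟩
  refine ⟨fun j => ?_, fun j k hjk => ?_, ?_⟩
  · rcases eq_or_ne j i with rfl | hj
    · simpa using (h.isMatching j).insert hb hc
    · simpa [hM j hj] using h.isMatching j
  · rcases eq_or_ne j i with rfl | hj
    · simpa [hM k hjk.symm] using hdisj k hjk.symm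
    rcases eq_or_ne k i with rfl | hk
    · simpa [hM j hj] using (hdisj j hj).symm
    · simpa [hM j hj, hM k hk] using h.pairwiseDisjoint hjk
  · rw [← h.biUnion_eq]
    ext e
    simp only [mem_biUnion, mem_univ, true_and, mem_insert, Function.update_apply]
    constructor
    · rintro ⟨j, hj⟩
      split_ifs at hj with hji
      · exact (mem_insert.1 hj).imp id fun hj => ⟨i, hj⟩
      · exact Or.inr ⟨j, hj⟩
    · rintro (rfl | ⟨j, hj⟩)
      · exact ⟨i, by simp⟩
      · refine ⟨j, ?_⟩
        split_ifs with hji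
        · exact mem_insert_of_mem (hji ▸ hj)
        · exact hj

lemma exchange (h : IsMatchingDecomp H M) {α β : ι} (hαβ : α ≠ β) (hN₁ : IsMatching N₁)
    (hN₂ : IsMatching N₂) (hN : Disjoint N₁ N₂) (hunion : N₁ ∪ N₂ = M α ∪ M β) :
    IsMatchingDecomp H (Function.update (Function.update M α N₁) β N₂) := by
  refine ⟨fun j => ?_, pairwise_disjoint_update_update h.pairwiseDisjoint hαβ hN hunion,
    (biUnion_update_update hαβ hunion).trans h.biUnion_eq⟩
  rcases eq_or_ne j β with rfl | hjβ
  · simpa using hN₂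
  rcases eq_or_ne j α with rfl | hjα
  · simpa [hjβ] using hN₁
  simpa [update_update_of_ne hjα hjβ] using h.isMatching j

end IsMatchingDecomp

variable [DecidableEq ι] {X Y : Set V}

lemma IsMatchingDecomp.exists_misses_both {H : Finset (Sym2 V)} {M : ι → Finset (Sym2 V)}
    (h : IsMatchingDecomp H M) (hXY : Disjoint X Y) (hH : IsCrossing X Y H) {b c : V}
    (hb : b ∈ X) (hc : c ∈ Y) {α β : ι} (hα : Misses (M α) b) (hβ : Misses (M β) c) :
    ∃ M' : ι → Finset (Sym2 V), IsMatchingDecomp H M' ∧ ∃ i, Misses (M' i) b ∧ Misses (M' i) c := by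
  by_cases hαc : Misses (M α) c
  · exact ⟨M, h, α, hα, hαc⟩
  have hαβ : α ≠ β := fun hαβ => hαc (hαβ ▸ hβ)
  obtain ⟨N₁, N₂, hN⟩ := exists_isKempeSwap hXY.symm (h.isMatching α) (h.isMatching β)
    (h.pairwiseDisjoint hαβ) (hH.mono (h.subset α)).symm (hH.mono (h.subset β)).symm hc hβ
  refine ⟨_, h.exchange hαβ hN.isMatching_left hN.isMatching_right hN.disjoint hN.union_eq, α, ?_⟩
  rw [Function.update_of_ne hαβ, Function.update_self]
  exact ⟨(hN.of_misses_of_mem_right b hb hα).1, hN.misses_start⟩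

/-- König's edge colouring theorem for bipartite graphs. -/
theorem exists_isMatchingDecomp_of_edgeDeg_le (hXY : Disjoint X Y) {H : Finset (Sym2 V)}
    (hH : IsCrossing X Y H) (hdeg : ∀ v, edgeDeg H v ≤ Fintype.card ι) :
    ∃ M : ι → Finset (Sym2 V), IsMatchingDecomp H M := by
  induction H using Finset.induction_on with
  | empty => exact ⟨fun _ => ∅, fun _ => by simp [IsMatching], fun _ _ _ => by simp, by ext; simp⟩
  | insert e H he ih =>
    obtain ⟨M, hM⟩ := ih (hH.mono (subset_insert e H))
      fun v => (edgeDeg_mono (subset_insert e H) v).trans (hdeg v)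
    obtain ⟨b, hb, c, hc, rfl⟩ := hH e (mem_insert_self e H)
    have hlt : ∀ v ∈ s(b, c), edgeDeg H v < Fintype.card ι := fun v hv => by
      have := hdeg v
      rw [edgeDeg_insert_of_mem he hv] at this
      omega
    obtain ⟨α, hα⟩ := hM.exists_misses (hlt b (Sym2.mem_mk_left b c))
    obtain ⟨β, hβ⟩ := hM.exists_misses (hlt c (Sym2.mem_mk_right b c))
    obtain ⟨M', hM', i, hib, hic⟩ :=
      hM.exists_misses_both hXY (hH.mono (subset_insert _ H)) hb hc hα hβ
    exact ⟨_, hM'.insert_edge he hib hic⟩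

end EdgeColoring

section DegreeBounded

variable [DecidableEq V] {F H K : Finset (Sym2 V)} {X Y : Set V} {p : ℕ}

/-- Alternating paths with respect to `H ⊆ F`: they start at a vertex of `X` of `H`-degree
below `p`, leave `X` along edges of `F \ H` and leave `Y` along edges of `H`. The list holds the
vertices visited so far, the current one first. -/
inductive AltPath (F H : Finset (Sym2 V)) (X Y : Set V) (p : ℕ) : V → List V → Prop
  | start (b : V) : b ∈ X → edgeDeg H b < p → AltPath F H X Y p b [b]
  | toRight (b c : V) (L : List V) : AltPath F H X Y p b L → b ∈ X → c ∈ Y → c ∉ L →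
      s(b, c) ∈ F → s(b, c) ∉ H → AltPath F H X Y p c (c :: L)
  | toLeft (c b : V) (L : List V) : AltPath F H X Y p c L → c ∈ Y → b ∈ X → b ∉ L →
      s(b, c) ∈ H → AltPath F H X Y p b (b :: L)

def AltReachable (F H : Finset (Sym2 V)) (X Y : Set V) (p : ℕ) (v : V) : Prop :=
  ∃ L, AltPath F H X Y p v L

namespace AltPath

variable {v : V} {L : List V}

lemma head_mem (h : AltPath F H X Y p v L) : v ∈ L := by
  cases h <;> simp

lemma altReachable_of_mem (h : AltPath F H X Y p v L) {u : V} (hu : u ∈ L) :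
    AltReachable F H X Y p u := by
  induction h with
  | start b hb hdeg =>
    rw [List.mem_singleton.1 hu]
    exact ⟨_, start b hb hdeg⟩
  | toRight b c L h hb hc hcL hF hH ih =>
    rcases List.mem_cons.1 hu with rfl | hu
    exacts [⟨_, toRight b u L h hb hc hcL hF hH⟩, ih hu]
  | toLeft c b L h hc hb hbL hH ih =>
    rcases List.mem_cons.1 hu with rfl | hu
    exacts [⟨_, toLeft c u L h hc hb hbL hH⟩, ih hu]

end AltPath

lemma AltReachable.toRight {b c : V} (h : AltReachable F H X Y p b) (hb : b ∈ X) (hc : c ∈ Y)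
    (hF : s(b, c) ∈ F) (hH : s(b, c) ∉ H) : AltReachable F H X Y p c := by
  obtain ⟨L, hL⟩ := h
  by_cases hcL : c ∈ L
  exacts [hL.altReachable_of_mem hcL, ⟨_, .toRight b c L hL hb hc hcL hF hH⟩]

lemma AltReachable.toLeft {b c : V} (h : AltReachable F H X Y p c) (hc : c ∈ Y) (hb : b ∈ X)
    (hH : s(b, c) ∈ H) : AltReachable F H X Y p b := by
  obtain ⟨L, hL⟩ := h
  by_cases hbL : b ∈ L
  exacts [hL.altReachable_of_mem hbL, ⟨_, .toLeft c b L hL hc hb hbL hH⟩]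

/-- `K` is `H` with the edges of an alternating path through the vertices `L`, ending at `v ∈ X`,
flipped. -/
structure IsLeftFlip (F H K : Finset (Sym2 V)) (p : ℕ) (L : List V) (v : V) : Prop where
  subset : K ⊆ F
  agreeAt : ∀ u ∉ L, AgreeAt K H u
  card_eq : #K = #H
  edgeDeg_lt : edgeDeg K v < p
  edgeDeg_le : ∀ u, edgeDeg K u ≤ p

/-- `K` is `H` with the edges of an alternating path through the vertices `L`, ending at `v ∈ Y`,
flipped. -/
structure IsRightFlip (F H K : Finset (Sym2 V)) (p : ℕ) (L : List V) (v : V) : Prop where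
  subset : K ⊆ F
  agreeAt : ∀ u ∉ L, AgreeAt K H u
  card_eq : #K = #H + 1
  edgeDeg_le_succ : edgeDeg K v ≤ edgeDeg H v + 1
  edgeDeg_le : ∀ u ≠ v, edgeDeg K u ≤ p

variable {L : List V} {b c : V}

lemma IsLeftFlip.insert (h : IsLeftFlip F H K p L b) (hbL : b ∈ L) (hcL : c ∉ L)
    (hF : s(b, c) ∈ F) (hH : s(b, c) ∉ H) : IsRightFlip F H (insert s(b, c) K) p (c :: L) c := by
  have hc := h.agreeAt c hcL
  have hK : s(b, c) ∉ K := fun hK => hH ((hc _ (Sym2.mem_mk_right b c)).1 hK)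
  refine ⟨insert_subset hF h.subset, fun u hu => ?_, ?_, ?_, fun u hu => ?_⟩
  · have hub : u ≠ b := fun hub => hu (List.mem_cons_of_mem c (hub ▸ hbL))
    have huc : u ≠ c := fun huc => hu (huc ▸ List.mem_cons_self)
    refine (h.agreeAt u fun huL => hu (List.mem_cons_of_mem c huL)).insert_left fun hue => ?_
    rcases Sym2.mem_iff.1 hue with rfl | rfl <;> contradiction
  · rw [card_insert_of_notMem hK, h.card_eq]
  · rw [edgeDeg_insert_of_mem hK (Sym2.mem_mk_right b c), hc.edgeDeg_eq]
  · by_cases hue : u ∈ s(b, c)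
    · rcases Sym2.mem_iff.1 hue with rfl | rfl
      · rw [edgeDeg_insert_of_mem hK hue]
        exact h.edgeDeg_lt
      · exact absurd rfl hu
    · rw [edgeDeg_insert_of_notMem hue]
      exact h.edgeDeg_le u

lemma IsRightFlip.erase (h : IsRightFlip F H K p L c) (hdeg : ∀ u, edgeDeg H u ≤ p)
    (hcL : c ∈ L) (hbL : b ∉ L) (hH : s(b, c) ∈ H) :
    IsLeftFlip F H (K.erase s(b, c)) p (b :: L) b := by
  have hb := h.agreeAt b hbL
  have hK : s(b, c) ∈ K := (hb _ (Sym2.mem_mk_left b c)).2 hH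
  refine ⟨(erase_subset _ _).trans h.subset, fun u hu => ?_, ?_, ?_, fun u => ?_⟩
  · have hub : u ≠ b := fun hub => hu (hub ▸ List.mem_cons_self)
    have huc : u ≠ c := fun huc => hu (List.mem_cons_of_mem b (huc ▸ hcL))
    refine (h.agreeAt u fun huL => hu (List.mem_cons_of_mem b huL)).erase_left fun hue => ?_
    rcases Sym2.mem_iff.1 hue with rfl | rfl <;> contradiction
  · have := card_erase_add_one hK
    have := h.card_eq
    omega
  · have := edgeDeg_erase_add_one hK (Sym2.mem_mk_left b c)
    have := hb.edgeDeg_eq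
    have := hdeg b
    omega
  · by_cases huc : u = c
    · subst huc
      have := edgeDeg_erase_add_one hK (Sym2.mem_mk_right b u)
      have := h.edgeDeg_le_succ
      have := hdeg u
      omega
    · exact (edgeDeg_mono (erase_subset _ _) u).trans (h.edgeDeg_le u huc)

lemma AltPath.exists_flip (hXY : Disjoint X Y) (hHF : H ⊆ F) (hdeg : ∀ u, edgeDeg H u ≤ p)
    {v : V} (h : AltPath F H X Y p v L) :
    (v ∈ X → ∃ K, IsLeftFlip F H K p L v) ∧ (v ∈ Y → ∃ K, IsRightFlip F H K p L v) := by
  induction h with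
  | start b hb hlt =>
    exact ⟨fun _ => ⟨H, hHF, fun _ _ _ _ => Iff.rfl, rfl, hlt, hdeg⟩,
      fun hb' => absurd hb' (hXY.notMem_of_mem_left hb)⟩
  | toRight b c L h hb hc hcL hF hH ih =>
    obtain ⟨K, hK⟩ := ih.1 hb
    exact ⟨fun hc' => absurd hc (hXY.notMem_of_mem_left hc'),
      fun _ => ⟨_, hK.insert h.head_mem hcL hF hH⟩⟩
  | toLeft c b L h hc hb hbL hH ih =>
    obtain ⟨K, hK⟩ := ih.2 hc
    exact ⟨fun _ => ⟨_, hK.erase hdeg h.head_mem hbL hH⟩,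
      fun hb' => absurd hb (hXY.notMem_of_mem_right hb')⟩

lemma exists_max_edgeDeg_le (F : Finset (Sym2 V)) (p : ℕ) :
    ∃ H ⊆ F, (∀ v, edgeDeg H v ≤ p) ∧ ∀ K ⊆ F, (∀ v, edgeDeg K v ≤ p) → #K ≤ #H := by
  classical
  obtain ⟨H, hH, hmax⟩ := exists_max_image {K ∈ F.powerset | ∀ v, edgeDeg K v ≤ p} card
    ⟨∅, mem_filter.2 ⟨empty_mem_powerset F, fun v => by simp [edgeDeg]⟩⟩
  rw [mem_filter, mem_powerset] at hH
  exact ⟨H, hH.1, hH.2, fun K hKF hK => hmax K (mem_filter.2 ⟨mem_powerset.2 hKF, hK⟩)⟩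

end DegreeBounded

section Cover

variable [DecidableEq V] {F H : Finset (Sym2 V)} {X Y : Set V} {p : ℕ}

def edgesAvoiding (F : Finset (Sym2 V)) (W : Finset V) : Finset (Sym2 V) := {e ∈ F | ∀ w ∈ W, w ∉ e}

lemma mem_edgesAvoiding {W : Finset V} {e : Sym2 V} :
    e ∈ edgesAvoiding F W ↔ e ∈ F ∧ ∀ w ∈ W, w ∉ e :=
  mem_filter

lemma card_eq_mul_card_add_card_edgesAvoiding {W : Finset V} (hHF : H ⊆ F)
    (hsat : ∀ w ∈ W, edgeDeg H w = p)
    (hsep : ∀ e ∈ H, ∀ w ∈ W, ∀ w' ∈ W, w ∈ e → w' ∈ e → w = w')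
    (hcov : edgesAvoiding F W ⊆ H) :
    #H = p * #W + #(edgesAvoiding F W) := by
  have hmeet : #{e ∈ H | ∃ w ∈ W, w ∈ e} = p * #W := by
    rw [← sum_edgeDeg_eq_card hsep, sum_const_nat hsat, mul_comm]
  have hmiss : {e ∈ H | ¬∃ w ∈ W, w ∈ e} = edgesAvoiding F W := by
    ext e
    simp only [mem_filter, not_exists, not_and]
    exact ⟨fun ⟨he, hW⟩ => mem_edgesAvoiding.2 ⟨hHF he, hW⟩,
      fun he => ⟨hcov he, (mem_edgesAvoiding.1 he).2⟩⟩
  rw [← card_filter_add_card_filter_not (fun e => ∃ w ∈ W, w ∈ e), hmeet, hmiss]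

lemma AltReachable.edgeDeg_eq (hXY : Disjoint X Y) (hHF : H ⊆ F) (hdeg : ∀ v, edgeDeg H v ≤ p)
    (hmax : ∀ K ⊆ F, (∀ v, edgeDeg K v ≤ p) → #K ≤ #H) {c : V}
    (h : AltReachable F H X Y p c) (hc : c ∈ Y) : edgeDeg H c = p := by
  refine (hdeg c).antisymm (not_lt.1 fun hlt => ?_)
  obtain ⟨L, hL⟩ := h
  obtain ⟨K, hK⟩ := (hL.exists_flip hXY hHF hdeg).2 hc
  have hKdeg : ∀ v, edgeDeg K v ≤ p := fun v => by
    by_cases hv : v = c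
    · subst hv
      have := hK.edgeDeg_le_succ
      omega
    · exact hK.edgeDeg_le v hv
  have := hmax K hK.subset hKdeg
  have := hK.card_eq
  omega

/-- König's duality for degree-bounded subgraphs: the vertices of `X` that no alternating path
reaches, together with the vertices of `Y` that one does, form a "cover" that is tight for a
maximum `H`. -/
lemma exists_tight_cover [Fintype V] (hXY : Disjoint X Y) (hF : IsCrossing X Y F) (hHF : H ⊆ F)
    (hdeg : ∀ v, edgeDeg H v ≤ p) (hmax : ∀ K ⊆ F, (∀ v, edgeDeg K v ≤ p) → #K ≤ #H) :
    ∃ W : Finset V, (∀ w ∈ W, w ∈ X ∪ Y) ∧ (∀ w ∈ W, edgeDeg H w = p) ∧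
      (∀ e ∈ H, ∀ w ∈ W, ∀ w' ∈ W, w ∈ e → w' ∈ e → w = w') ∧
      edgesAvoiding F W ⊆ H := by
  classical
  set R := AltReachable F H X Y p
  set W : Finset V := univ.filter fun v => v ∈ X ∧ ¬R v ∨ v ∈ Y ∧ R v
  have hW : ∀ v, v ∈ W ↔ v ∈ X ∧ ¬R v ∨ v ∈ Y ∧ R v := by simp [W]
  have hWX : ∀ b ∈ X, b ∈ W ↔ ¬R b := fun b hb => by
    simp [hW, hb, hXY.notMem_of_mem_left hb]
  have hWY : ∀ c ∈ Y, c ∈ W ↔ R c := fun c hc => by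
    simp [hW, hc, hXY.notMem_of_mem_right hc]
  refine ⟨W, fun w hw => ?_, fun w hw => ?_, fun e he => ?_, fun e he => ?_⟩
  · rcases (hW w).1 hw with h | h
    exacts [Or.inl h.1, Or.inr h.1]
  · rcases (hW w).1 hw with ⟨hw, hR⟩ | ⟨hw, hR⟩
    · exact (hdeg w).antisymm (not_lt.1 fun hlt => hR ⟨_, .start w hw hlt⟩)
    · exact hR.edgeDeg_eq hXY hHF hdeg hmax hw
  · obtain ⟨b, hb, c, hc, rfl⟩ := hF e (hHF he)
    have hbc : ¬(b ∈ W ∧ c ∈ W) := fun ⟨hbW, hcW⟩ =>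
      (hWX b hb).1 hbW (((hWY c hc).1 hcW).toLeft hc hb he)
    intro w hw w' hw' hwe hw'e
    rcases Sym2.mem_iff.1 hwe with rfl | rfl <;> rcases Sym2.mem_iff.1 hw'e with rfl | rfl
    exacts [rfl, absurd ⟨hw, hw'⟩ hbc, absurd ⟨hw', hw⟩ hbc, rfl]
  · obtain ⟨he, heW⟩ := mem_edgesAvoiding.1 he
    obtain ⟨b, hb, c, hc, rfl⟩ := hF e he
    have hRb : R b := not_not.1 fun hR => heW b ((hWX b hb).2 hR) (Sym2.mem_mk_left b c)
    have hRc : ¬R c := fun hR => heW c ((hWY c hc).2 hR) (Sym2.mem_mk_right b c)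
    by_contra hH
    exact hRc (hRb.toRight hb hc he hH)

theorem exists_edgeDeg_le_card_eq [Fintype V] (hXY : Disjoint X Y) (hF : IsCrossing X Y F)
    (p : ℕ) : ∃ H ⊆ F, (∀ v, edgeDeg H v ≤ p) ∧
      ∃ W : Finset V, (∀ w ∈ W, w ∈ X ∪ Y) ∧ #H = p * #W + #(edgesAvoiding F W) := by
  obtain ⟨H, hHF, hdeg, hmax⟩ := exists_max_edgeDeg_le F p
  obtain ⟨W, hWXY, hsat, hsep, hcov⟩ := exists_tight_cover hXY hF hHF hdeg hmax
  exact ⟨H, hHF, hdeg, W, hWXY, card_eq_mul_card_add_card_edgesAvoiding hHF hsat hsep hcov⟩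

end Cover

section Transversals

variable {G : SimpleGraph V} {A B C : Set V}

lemma isTriTransversal_edgeSet (G : SimpleGraph V) : IsTriTransversal G G.edgeSet := by
  classical
  refine ⟨subset_rfl, fun t ht => ?_⟩
  obtain ⟨x, y, z, hxy, -, -, rfl⟩ := is3Clique_iff.1 ht
  exact ⟨s(x, y), ⟨x, by simp, y, by simp, hxy.ne, rfl⟩, hxy⟩

lemma triTransversalNum_le {E' : Set (Sym2 V)} (h : IsTriTransversal G E') :
    triTransversalNum G ≤ E'.ncard :=
  Nat.sInf_le ⟨E', h, rfl⟩

lemma le_triTransversalNum [Finite V] {n : ℕ}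
    (h : ∀ E : Finset (Sym2 V), IsTriTransversal G E → n ≤ #E) : n ≤ triTransversalNum G := by
  obtain ⟨E', hE', hcard⟩ : triTransversalNum G ∈ _ :=
    Nat.sInf_mem ⟨_, _, isTriTransversal_edgeSet G, rfl⟩
  have hfin := Set.toFinite E'
  rw [← hfin.coe_toFinset] at hE' hcard
  rw [← hcard, Set.ncard_coe_finset]
  exact h _ hE'

lemma IsTripartition.exists_mem_of_isNClique (hpart : IsTripartition G A B C) {t : Finset V}
    (ht : G.IsNClique 3 t) : ∃ a ∈ t, ∃ b ∈ t, ∃ c ∈ t, a ∈ A ∧ b ∈ B ∧ c ∈ C := by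
  classical
  obtain ⟨hcov, -, -, -, hA, hB, hC⟩ := hpart
  -- an independent set meets a triangle at most once, and `A, B, C` together cover it
  have hle : ∀ S : Set V, (∀ u ∈ S, ∀ v ∈ S, ¬G.Adj u v) → #{x ∈ t | x ∈ S} ≤ 1 := fun S hS =>
    card_le_one.2 fun x hx y hy => by
      rw [mem_filter] at hx hy
      by_contra hne
      exact hS x hx.2 y hy.2 (ht.isClique hx.1 hy.1 hne)
  have hsum : #t ≤ #{x ∈ t | x ∈ A} + #{x ∈ t | x ∈ B} + #{x ∈ t | x ∈ C} := by
    refine (card_le_card fun x hx => ?_).trans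
      ((card_union_le _ _).trans (Nat.add_le_add_right (card_union_le _ _) _))
    have hx' : x ∈ A ∪ B ∪ C := hcov ▸ Set.mem_univ x
    simp only [mem_union, mem_filter, hx, true_and]
    exact hx'
  have := ht.card_eq
  have := hle A hA
  have := hle B hB
  have := hle C hC
  obtain ⟨a, ha⟩ := card_pos.1 (by omega : 0 < #{x ∈ t | x ∈ A})
  obtain ⟨b, hb⟩ := card_pos.1 (by omega : 0 < #{x ∈ t | x ∈ B})
  obtain ⟨c, hc⟩ := card_pos.1 (by omega : 0 < #{x ∈ t | x ∈ C})
  rw [mem_filter] at ha hb hc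
  exact ⟨a, ha.1, b, hb.1, c, hc.1, ha.2, hb.2, hc.2⟩

lemma IsTripartition.notMem_union (hpart : IsTripartition G A B C) {a : V} (ha : a ∈ A) :
    a ∉ B ∪ C := by
  obtain ⟨-, hAB, hAC, -⟩ := hpart
  exact fun h => h.elim (hAB.notMem_of_mem_left ha) (hAC.notMem_of_mem_left ha)

lemma isCrossing_of_coe_eq {F : Finset (Sym2 V)} (hF : (F : Set (Sym2 V)) = edgesBetween G B C) :
    IsCrossing B C F := fun e he => (hF ▸ mem_coe.2 he : e ∈ edgesBetween G B C).2

variable [DecidableEq V] {F : Finset (Sym2 V)}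

lemma IsTripartition.isTriTransversal_cover (hpart : IsTripartition G A B C)
    (hAB : CompleteSide G A B) (hAC : CompleteSide G A C)
    (hF : (F : Set (Sym2 V)) = edgesBetween G B C) {W : Finset V} (hW : ∀ w ∈ W, w ∈ B ∪ C) :
    IsTriTransversal G (edgesAvoiding F W ∪ {e | ∃ a ∈ A, ∃ w ∈ W, e = s(a, w)}) := by
  refine ⟨Set.union_subset (fun e he => ?_) ?_, fun t ht => ?_⟩
  · exact (hF ▸ mem_coe.2 (mem_edgesAvoiding.1 he).1 : e ∈ edgesBetween G B C).1
  · rintro _ ⟨a, ha, w, hw, rfl⟩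
    exact (hW w hw).elim (hAB a ha w) (hAC a ha w)
  obtain ⟨a, hat, b, hbt, c, hct, ha, hb, hc⟩ := hpart.exists_mem_of_isNClique ht
  by_cases hbc : ∀ w ∈ W, w ∉ s(b, c)
  · have hBC : Disjoint B C := hpart.2.2.2.1
    have hbc' : b ≠ c := fun h => hBC.notMem_of_mem_left hb (h ▸ hc)
    have hadj : G.Adj b c := ht.isClique hbt hct hbc'
    refine ⟨s(b, c), ⟨b, hbt, c, hct, hbc', rfl⟩, Or.inl (mem_edgesAvoiding.2 ⟨?_, hbc⟩)⟩
    exact mem_coe.1 (hF ▸ ⟨hadj, b, hb, c, hc, rfl⟩ : s(b, c) ∈ (F : Set (Sym2 V)))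
  · push Not at hbc
    obtain ⟨w, hw, hwe⟩ := hbc
    have hwt : w ∈ t := by rcases Sym2.mem_iff.1 hwe with rfl | rfl <;> assumption
    have haw : a ≠ w := fun h => hpart.notMem_union ha (h ▸ hW w hw)
    exact ⟨s(a, w), ⟨a, hat, w, hwt, haw, rfl⟩, Or.inr ⟨a, ha, w, hw, rfl⟩⟩

end Transversals

section Bounds

variable [DecidableEq V] {G : SimpleGraph V} {A B C : Set V} {F H : Finset (Sym2 V)}

lemma IsTripartition.triTransversalNum_le_mul_add [Fintype V] (hpart : IsTripartition G A B C)
    (hAB : CompleteSide G A B) (hAC : CompleteSide G A C)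
    (hF : (F : Set (Sym2 V)) = edgesBetween G B C) {W : Finset V} (hW : ∀ w ∈ W, w ∈ B ∪ C) :
    triTransversalNum G ≤ A.ncard * #W + #(edgesAvoiding F W) := by
  classical
  set AW : Finset (Sym2 V) := (A.toFinset ×ˢ W).image fun q => s(q.1, q.2)
  have hAW : (AW : Set (Sym2 V)) = {e | ∃ a ∈ A, ∃ w ∈ W, e = s(a, w)} := by
    ext e
    simp only [AW, coe_image, coe_product, Set.mem_image, Set.mem_prod, Set.coe_toFinset,
      mem_coe, Prod.exists, Set.mem_ofPred_eq]
    exact ⟨fun ⟨a, w, ⟨ha, hw⟩, h⟩ => ⟨a, ha, w, hw, h.symm⟩,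
      fun ⟨a, ha, w, hw, h⟩ => ⟨a, w, ⟨ha, hw⟩, h.symm⟩⟩
  have hcard : #AW = A.ncard * #W := by
    rw [card_image_of_injOn, card_product, Set.ncard_eq_toFinset_card']
    rintro ⟨a, w⟩ hq ⟨a', w'⟩ hq' heq
    simp only [coe_product, Set.mem_prod, Set.coe_toFinset, mem_coe] at hq hq'
    rcases Sym2.eq_iff.1 heq with ⟨rfl, rfl⟩ | ⟨rfl, rfl⟩
    · rfl
    · exact absurd (hW _ hq'.2) (hpart.notMem_union hq.1)
  have hdisj : Disjoint (edgesAvoiding F W) AW := disjoint_left.2 fun e he heAW => by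
    obtain ⟨b, hb, c, hc, rfl⟩ := isCrossing_of_coe_eq hF e (mem_edgesAvoiding.1 he).1
    obtain ⟨⟨a, w⟩, haw, heq⟩ := mem_image.1 heAW
    have ha : a ∈ A := Set.mem_toFinset.1 (mem_product.1 haw).1
    rcases Sym2.mem_iff.1 (heq ▸ Sym2.mem_mk_left a w : a ∈ s(b, c)) with rfl | rfl
    exacts [hpart.notMem_union ha (Or.inl hb), hpart.notMem_union ha (Or.inr hc)]
  have htrans : IsTriTransversal G ↑(edgesAvoiding F W ∪ AW) := by
    rw [coe_union, hAW]
    exact hpart.isTriTransversal_cover hAB hAC hF hW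
  calc triTransversalNum G ≤ #(edgesAvoiding F W ∪ AW) := by
        rw [← Set.ncard_coe_finset]
        exact triTransversalNum_le htrans
    _ = A.ncard * #W + #(edgesAvoiding F W) := by
        rw [card_union_of_disjoint hdisj, hcard, add_comm]

lemma IsTriTransversal.mem_or_mem {E' : Set (Sym2 V)} (hE : IsTriTransversal G E') {a b c : V}
    (habc : G.IsNClique 3 {a, b, c}) (hbc : s(b, c) ∉ E') : s(a, b) ∈ E' ∨ s(a, c) ∈ E' := by
  obtain ⟨e, ⟨u, hu, v, hv, huv, rfl⟩, he⟩ := hE.2 _ habc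
  have hedge : s(u, v) = s(a, b) ∨ s(u, v) = s(a, c) ∨ s(u, v) = s(b, c) := by
    simp only [mem_insert, mem_singleton] at hu hv
    rcases hu with rfl | rfl | rfl <;> rcases hv with rfl | rfl | rfl <;>
      first | exact absurd rfl huv | simp
  rcases hedge with h | h | h <;> rw [h] at he
  exacts [Or.inl he, Or.inr he, absurd he hbc]

/-- Every edge `bc ∈ H \ E` spans a triangle with `a`, which `E` must meet in `ab` or `ac`. -/
lemma card_sdiff_le_mul_edgeDeg [Fintype V] (hAB : CompleteSide G A B)
    (hAC : CompleteSide G A C) (hF : (F : Set (Sym2 V)) = edgesBetween G B C) (hHF : H ⊆ F)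
    {p : ℕ} (hdeg : ∀ v, edgeDeg H v ≤ p) {E : Finset (Sym2 V)} (hE : IsTriTransversal G E)
    {a : V} (ha : a ∈ A) : #(H \ E) ≤ p * edgeDeg E a := by
  set S : Finset V := univ.filter fun v => s(a, v) ∈ E
  have hcov : CoversEdges (S : Set V) ↑(H \ E) := by
    intro e he
    rw [mem_coe, mem_sdiff] at he
    have heF : e ∈ edgesBetween G B C := hF ▸ mem_coe.2 (hHF he.1)
    obtain ⟨hadj, b, hb, c, hc, rfl⟩ := heF
    rcases hE.mem_or_mem (is3Clique_triple_iff.2 ⟨hAB a ha b hb, hAC a ha c hc, hadj⟩) he.2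
      with h | h
    exacts [⟨b, by simpa [S] using h, Sym2.mem_mk_left b c⟩,
      ⟨c, by simpa [S] using h, Sym2.mem_mk_right b c⟩]
  have hS : #S ≤ edgeDeg E a :=
    card_le_card_of_injOn (fun v => s(a, v))
      (fun v hv => mem_filter.2 ⟨(mem_filter.1 hv).2, Sym2.mem_mk_left a v⟩)
      (fun _ _ _ _ h => Sym2.congr_right.1 h)
  calc #(H \ E) ≤ ∑ v ∈ S, edgeDeg (H \ E) v := card_le_sum_edgeDeg hcov
    _ ≤ ∑ _v ∈ S, p := sum_le_sum fun v _ => (edgeDeg_mono sdiff_subset v).trans (hdeg v)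
    _ = p * #S := by rw [sum_const, smul_eq_mul, mul_comm]
    _ ≤ p * edgeDeg E a := Nat.mul_le_mul_left p hS

/-- As `A` is independent, an edge meets `A` at most once, and an edge of `F` not at all. -/
lemma IsTripartition.sum_edgeDeg_add_card_le (hpart : IsTripartition G A B C)
    (hF : (F : Set (Sym2 V)) = edgesBetween G B C) {E : Finset (Sym2 V)}
    (hE : (E : Set (Sym2 V)) ⊆ G.edgeSet) {S : Finset V} (hS : ∀ a ∈ S, a ∈ A) :
    ∑ a ∈ S, edgeDeg E a + #{e ∈ E | e ∈ F} ≤ #E := by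
  have hsep : ∀ e ∈ E, ∀ a ∈ S, ∀ a' ∈ S, a ∈ e → a' ∈ e → a = a' := by
    intro e he a ha a' ha' hae ha'e
    by_contra hne
    have hadj : G.Adj a a' := by
      rw [← mem_edgeSet, ← (Sym2.mem_and_mem_iff hne).1 ⟨hae, ha'e⟩]
      exact hE (mem_coe.2 he)
    have hAind : ∀ u ∈ A, ∀ v ∈ A, ¬G.Adj u v := hpart.2.2.2.2.1
    exact hAind a (hS a ha) a' (hS a' ha') hadj
  have hdisj : Disjoint {e ∈ E | ∃ a ∈ S, a ∈ e} {e ∈ E | e ∈ F} := by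
    refine disjoint_filter.2 fun e _ ⟨a, ha, hae⟩ heF => ?_
    obtain ⟨b, hb, c, hc, rfl⟩ := isCrossing_of_coe_eq hF e heF
    rcases Sym2.mem_iff.1 hae with rfl | rfl
    exacts [hpart.notMem_union (hS a ha) (Or.inl hb), hpart.notMem_union (hS a ha) (Or.inr hc)]
  rw [sum_edgeDeg_eq_card hsep, ← card_union_of_disjoint hdisj]
  exact card_le_card (union_subset (filter_subset _ _) (filter_subset _ _))

lemma IsTripartition.card_le_of_isTriTransversal [Fintype V] (hpart : IsTripartition G A B C)
    (hAB : CompleteSide G A B) (hAC : CompleteSide G A C)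
    (hF : (F : Set (Sym2 V)) = edgesBetween G B C) (hHF : H ⊆ F)
    (hdeg : ∀ v, edgeDeg H v ≤ A.ncard) {E : Finset (Sym2 V)} (hE : IsTriTransversal G E) :
    #H ≤ #E := by
  rcases Nat.eq_zero_or_pos A.ncard with hp | hp
  · obtain rfl : H = ∅ := eq_empty_of_forall_notMem fun e he => by
      induction e using Sym2.ind with
      | h x y => have := (one_le_edgeDeg he (Sym2.mem_mk_left x y)).trans (hdeg x); omega
    simp
  set S := (Set.toFinite A).toFinset
  have hS : ∀ a ∈ S, a ∈ A := fun a ha => (Set.toFinite A).mem_toFinset.1 ha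
  have hAE : #(H \ E) ≤ ∑ a ∈ S, edgeDeg E a := by
    refine Nat.le_of_mul_le_mul_left ?_ hp
    calc A.ncard * #(H \ E) = ∑ _a ∈ S, #(H \ E) := by
          rw [sum_const, smul_eq_mul, Set.ncard_eq_toFinset_card A]
      _ ≤ ∑ a ∈ S, A.ncard * edgeDeg E a := sum_le_sum fun a ha =>
          card_sdiff_le_mul_edgeDeg hAB hAC hF hHF hdeg hE (hS a ha)
      _ = A.ncard * ∑ a ∈ S, edgeDeg E a := (mul_sum _ _ _).symm
  have hFE : #(H ∩ E) ≤ #{e ∈ E | e ∈ F} :=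
    card_le_card fun e he => mem_filter.2 ⟨(mem_inter.1 he).2, hHF (mem_inter.1 he).1⟩
  have := hpart.sum_edgeDeg_add_card_le hF hE.1 hS
  have := card_inter_add_card_sdiff H E
  omega

end Bounds

/-- In a bilaterally-complete tripartite graph `G` with complete sides `G[A∪B]`,
`G[A∪C]` and `|A| = p`, there exist pairwise disjoint matchings `M_1, …, M_k` in
`G[B ∪ C]` with `k ≤ p` and `|M_1| + ⋯ + |M_k| = τ△(G)`. -/
theorem exists_matchings_summing_to_tau [Fintype V] (G : SimpleGraph V)
    (A B C : Set V) (hpart : IsTripartition G A B C)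
    (hAB : CompleteSide G A B) (hAC : CompleteSide G A C)
    (p : ℕ) (hp : A.ncard = p) :
    ∃ k ≤ p, ∃ M : Fin k → Set (Sym2 V),
      (∀ i, IsMatchingIn (edgesBetween G B C) (M i)) ∧
      (∀ i j, i ≠ j → Disjoint (M i) (M j)) ∧
      ∑ i, (M i).ncard = triTransversalNum G := by
  classical
  subst hp
  have hBC : Disjoint B C := hpart.2.2.2.1
  set F := (Set.toFinite (edgesBetween G B C)).toFinset
  have hF : (F : Set (Sym2 V)) = edgesBetween G B C := Set.Finite.coe_toFinset _
  have hcross := isCrossing_of_coe_eq hF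
  obtain ⟨H, hHF, hdeg, W, hW, hcard⟩ := exists_edgeDeg_le_card_eq hBC hcross A.ncard
  obtain ⟨M, hM⟩ := exists_isMatchingDecomp_of_edgeDeg_le (ι := Fin A.ncard) hBC
    (hcross.mono hHF) (by simpa using hdeg)
  have hτ : triTransversalNum G = #H :=
    le_antisymm (hcard ▸ hpart.triTransversalNum_le_mul_add hAB hAC hF hW)
      (le_triTransversalNum fun E hE => hpart.card_le_of_isTriTransversal hAB hAC hF hHF hdeg hE)
  refine ⟨A.ncard, le_rfl, fun i => M i, fun i => ⟨?_, hM.isMatching i⟩,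
    fun i j hij => disjoint_coe.2 (hM.pairwiseDisjoint hij), ?_⟩
  · rw [← hF]
    exact coe_subset.2 ((hM.subset i).trans hHF)
  · simp only [Set.ncard_coe_finset, hM.sum_card_eq, hτ]
end

section
/- (Mao Cheng) Let p, t be positive integers and let G[B∪C] be a finite bipartite graph with parts B and C. There exist p pairwise edge-disjoint matchings in G[B∪C] whose cardinalities sum to t if and only if for all B″ ⊆ B and all C″ ⊆ C, |∂(B″) ∩ ∂(C″)| + p(|B| + |C| − |B″| − |C″|) ≥ t. -/
open SimpleGraph

variable {V : Type*}

/-!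
The matchings `M₁, …, Mₚ` use each edge between `B''` and `C''` at most once in total, and each `Mᵢ`
has at most `|B \ B''| + |C \ C''|` other edges, since each of these meets `(B \ B'') ∪ (C \ C'')`
and distinct edges of a matching meet it in distinct vertices.

Conversely, the condition says that every cut of the network source → `B` → `C` → sink, with
capacity `p` on the vertices and `1` on the edges, has capacity at least `t`. A subgraph with `t`
edges and maximum degree at most `p` is then built edge by edge: the tight cuts form a lattice by
submodularity, and from its least member (or, failing that, from the greatest tight cut avoiding a
suitable vertex of `B`) one reads off an edge `e` meeting every tight cut; deleting `e` and lowering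
the capacities of its ends by one keeps every cut at least `t - 1`. Finally König's edge colouring
theorem splits the subgraph into `p` matchings: the `0/1` matrix of the subgraph is completed to an
`ℕ`-matrix with all line sums `p`, which Hall's theorem peels into `p` permutations.
-/

open Finset

lemma IsMatchingIn.mono {F M M' : Set (Sym2 V)} (hM : IsMatchingIn F M) (h : M' ⊆ M) :
    IsMatchingIn F M' :=
  ⟨h.trans hM.1, hM.2.mono h⟩

lemma IsMatchingIn.ncard_le_of_coversEdges [Finite V] {F M : Set (Sym2 V)} {S : Set V}
    (hM : IsMatchingIn F M) (hS : CoversEdges S M) : M.ncard ≤ S.ncard := by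
  classical
  have := Fintype.ofFinite V
  rw [Set.ncard_eq_toFinset_card' M, Set.ncard_eq_toFinset_card' S]
  refine card_le_card_of_forall_subsingleton (fun e v => v ∈ e)
    (by simpa [CoversEdges] using hS) ?_
  rintro v - e ⟨he, hve⟩ e' ⟨he', hve'⟩
  by_contra hne
  exact hM.2 (by simpa using he) (by simpa using he') hne v hve hve'

lemma sum_ncard_inter_le {α ι : Type*} [Finite α] [Fintype ι] {M : ι → Set α}
    (hM : ∀ i j, i ≠ j → Disjoint (M i) (M j)) (W : Set α) :
    ∑ i, (M i ∩ W).ncard ≤ W.ncard := by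
  rw [← finsum_eq_sum_of_fintype, ← Set.ncard_iUnion_of_finite (fun i => Set.toFinite _)
    fun i j hij => (hM i j hij).mono Set.inter_subset_left Set.inter_subset_left]
  exact Set.ncard_le_ncard (Set.iUnion_subset fun i => Set.inter_subset_right)

lemma coversEdges_sdiff_edgesBetween {G : SimpleGraph V} {B C : Set V}
    (hunion : B ∪ C = Set.univ) (hB : ∀ u ∈ B, ∀ v ∈ B, ¬G.Adj u v)
    (hC : ∀ u ∈ C, ∀ v ∈ C, ¬G.Adj u v) (B'' C'' : Set V) :
    CoversEdges ((B \ B'') ∪ (C \ C'')) (G.edgeSet \ edgesBetween G B'' C'') := by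
  have hBC : ∀ u v, G.Adj u v → u ∈ B → v ∈ C := fun u v huv hu =>
    (hunion ▸ Set.mem_univ v : v ∈ B ∪ C).resolve_left (hB u hu v · huv)
  have hCB : ∀ u v, G.Adj u v → u ∈ C → v ∈ B := fun u v huv hu =>
    (hunion ▸ Set.mem_univ v : v ∈ B ∪ C).resolve_right (hC u hu v · huv)
  have hcover : ∀ u v, G.Adj u v → u ∈ B → s(u, v) ∉ edgesBetween G B'' C'' →
      ∃ w ∈ (B \ B'') ∪ (C \ C''), w ∈ s(u, v) := fun u v huv hu hW => by
    by_cases hu'' : u ∈ B''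
    · by_cases hv'' : v ∈ C''
      · exact absurd ⟨huv, u, hu'', v, hv'', rfl⟩ hW
      · exact ⟨v, Or.inr ⟨hBC u v huv hu, hv''⟩, Sym2.mem_mk_right u v⟩
    · exact ⟨u, Or.inl ⟨hu, hu''⟩, Sym2.mem_mk_left u v⟩
  rintro e ⟨he, hW⟩
  induction e using Sym2.ind with
  | h u v =>
    have huv : G.Adj u v := he
    rcases (hunion ▸ Set.mem_univ u : u ∈ B ∪ C) with hu | hu
    · exact hcover u v huv hu hW
    · rw [Sym2.eq_swap] at hW ⊢
      exact hcover v u huv.symm (hCB u v huv hu) hW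

theorem sum_ncard_le_of_isMatchingIn [Finite V] {G : SimpleGraph V} {B C : Set V}
    (hunion : B ∪ C = Set.univ) (hB : ∀ u ∈ B, ∀ v ∈ B, ¬G.Adj u v)
    (hC : ∀ u ∈ C, ∀ v ∈ C, ¬G.Adj u v) {p : ℕ} {M : Fin p → Set (Sym2 V)}
    (hM : ∀ i, IsMatchingIn G.edgeSet (M i)) (hdisj : ∀ i j, i ≠ j → Disjoint (M i) (M j))
    (B'' C'' : Set V) :
    ∑ i, (M i).ncard ≤
      (edgesBetween G B'' C'').ncard + p * ((B \ B'').ncard + (C \ C'').ncard) := by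
  set W := edgesBetween G B'' C''
  have hout : ∀ i, (M i \ W).ncard ≤ (B \ B'').ncard + (C \ C'').ncard := fun i =>
    ((hM i).mono Set.sdiff_subset).ncard_le_of_coversEdges
      (fun e he => coversEdges_sdiff_edgesBetween hunion hB hC B'' C'' e
        ⟨(hM i).1 he.1, he.2⟩) |>.trans (Set.ncard_union_le _ _)
  calc ∑ i, (M i).ncard = ∑ i, (M i ∩ W).ncard + ∑ i, (M i \ W).ncard := by
        rw [← sum_add_distrib]
        exact sum_congr rfl fun i _ => (Set.ncard_inter_add_ncard_sdiff_eq_ncard _ _).symm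
    _ ≤ W.ncard + ∑ _i : Fin p, ((B \ B'').ncard + (C \ C'').ncard) :=
        add_le_add (sum_ncard_inter_le hdisj W) (sum_le_sum fun i _ => hout i)
    _ = W.ncard + p * ((B \ B'').ncard + (C \ C'').ncard) := by simp

section CutCapacity

variable [DecidableEq V] (E : Finset (V × V)) (d : V → ℕ) (B C : Finset V)

def crossingPairs (X Y : Finset V) : Finset (V × V) :=
  E.filter fun e => e.1 ∈ X ∧ e.2 ∈ Y

/-- The capacity of the cut `(X, Y)` of the network source → `B` → `C` → sink with capacities `d`
on the vertices and `1` on the arcs `E`. A subset of `E` with degrees bounded by `d` has at most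
this many elements: count its pairs in `X × Y`, and every other pair at an end in `B \ X` or
`C \ Y`. -/
def cutCapacity (X Y : Finset V) : ℕ :=
  #(crossingPairs E X Y) + ∑ b ∈ B \ X, d b + ∑ c ∈ C \ Y, d c

variable {E d B C}

lemma card_crossingPairs_insert_left {X Y : Finset V} {b : V} (hb : b ∉ X) :
    #(crossingPairs E (insert b X) Y) = #(crossingPairs E X Y) + #(crossingPairs E {b} Y) := by
  simp only [crossingPairs, card_filter, ← sum_add_distrib]
  refine sum_congr rfl fun e _ => ?_
  by_cases h1 : e.1 = b <;> by_cases h2 : e.1 ∈ X <;> by_cases h3 : e.2 ∈ Y <;> simp_all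

lemma card_crossingPairs_insert_right {X Y : Finset V} {c : V} (hc : c ∉ Y) :
    #(crossingPairs E X (insert c Y)) = #(crossingPairs E X Y) + #(crossingPairs E X {c}) := by
  simp only [crossingPairs, card_filter, ← sum_add_distrib]
  refine sum_congr rfl fun e _ => ?_
  by_cases h1 : e.2 = c <;> by_cases h2 : e.2 ∈ Y <;> by_cases h3 : e.1 ∈ X <;> simp_all

lemma cutCapacity_insert_left {X Y : Finset V} {b : V} (hbB : b ∈ B) (hbX : b ∉ X) :
    cutCapacity E d B C (insert b X) Y + d b =
      cutCapacity E d B C X Y + #(crossingPairs E {b} Y) := by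
  have hsdiff : B \ X = insert b (B \ insert b X) := by
    rw [sdiff_insert, insert_erase (mem_sdiff.2 ⟨hbB, hbX⟩)]
  rw [cutCapacity, cutCapacity, card_crossingPairs_insert_left hbX, hsdiff,
    sum_insert (by simp)]
  ring

lemma cutCapacity_insert_right {X Y : Finset V} {c : V} (hcC : c ∈ C) (hcY : c ∉ Y) :
    cutCapacity E d B C X (insert c Y) + d c =
      cutCapacity E d B C X Y + #(crossingPairs E X {c}) := by
  have hsdiff : C \ Y = insert c (C \ insert c Y) := by
    rw [sdiff_insert, insert_erase (mem_sdiff.2 ⟨hcC, hcY⟩)]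
  rw [cutCapacity, cutCapacity, card_crossingPairs_insert_right hcY, hsdiff,
    sum_insert (by simp)]
  ring

lemma cutCapacity_erase_left {X Y : Finset V} {b : V} (hXB : X ⊆ B) (hb : b ∈ X) :
    cutCapacity E d B C (X.erase b) Y + #(crossingPairs E {b} Y) =
      cutCapacity E d B C X Y + d b := by
  have h := cutCapacity_insert_left (E := E) (d := d) (C := C) (Y := Y) (hXB hb) (notMem_erase b X)
  rw [insert_erase hb] at h
  omega

lemma cutCapacity_erase_right {X Y : Finset V} {c : V} (hYC : Y ⊆ C) (hc : c ∈ Y) :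
    cutCapacity E d B C X (Y.erase c) + #(crossingPairs E X {c}) =
      cutCapacity E d B C X Y + d c := by
  have h := cutCapacity_insert_right (E := E) (d := d) (B := B) (X := X) (hYC hc) (notMem_erase c Y)
  rw [insert_erase hc] at h
  omega

lemma cutCapacity_inter_union_add_le (X₁ X₂ Y₁ Y₂ : Finset V) :
    cutCapacity E d B C (X₁ ∩ X₂) (Y₁ ∪ Y₂) + cutCapacity E d B C (X₁ ∪ X₂) (Y₁ ∩ Y₂) ≤
      cutCapacity E d B C X₁ Y₁ + cutCapacity E d B C X₂ Y₂ := by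
  have hE : #(crossingPairs E (X₁ ∩ X₂) (Y₁ ∪ Y₂)) + #(crossingPairs E (X₁ ∪ X₂) (Y₁ ∩ Y₂)) ≤
      #(crossingPairs E X₁ Y₁) + #(crossingPairs E X₂ Y₂) := by
    simp only [crossingPairs, card_filter, ← sum_add_distrib]
    refine sum_le_sum fun e _ => ?_
    by_cases h1 : e.1 ∈ X₁ <;> by_cases h2 : e.1 ∈ X₂ <;> by_cases h3 : e.2 ∈ Y₁ <;>
      by_cases h4 : e.2 ∈ Y₂ <;> simp [h1, h2, h3, h4]
  have hB : ∑ x ∈ B \ (X₁ ∩ X₂), d x + ∑ x ∈ B \ (X₁ ∪ X₂), d x =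
      ∑ x ∈ B \ X₁, d x + ∑ x ∈ B \ X₂, d x := by
    rw [sdiff_inter_distrib_right, sdiff_union_distrib, sum_union_inter]
  have hC : ∑ x ∈ C \ (Y₁ ∪ Y₂), d x + ∑ x ∈ C \ (Y₁ ∩ Y₂), d x =
      ∑ x ∈ C \ Y₁, d x + ∑ x ∈ C \ Y₂, d x := by
    rw [sdiff_inter_distrib_right, sdiff_union_distrib, add_comm, sum_union_inter]
  simp only [cutCapacity]
  omega

end CutCapacity

lemma exists_least_of_inter_union_mem {α : Type*} [DecidableEq α]
    {T : Finset (Finset α × Finset α)} (hT : T.Nonempty)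
    (hcl : ∀ q ∈ T, ∀ r ∈ T, (q.1 ∩ r.1, q.2 ∪ r.2) ∈ T) :
    ∃ z ∈ T, ∀ q ∈ T, z.1 ⊆ q.1 ∧ q.2 ⊆ z.2 := by
  -- in `Finset α × (Finset α)ᵒᵈ` the closure condition says that `T` is closed under `⊓`
  let φ : Finset α × Finset α → Finset α × (Finset α)ᵒᵈ := fun q => (q.1, OrderDual.toDual q.2)
  obtain ⟨z, hz, hzinf⟩ : ∃ z ∈ T, φ z = T.inf' hT φ := by
    simpa using Finset.inf'_mem (φ '' T) (by
      rintro _ ⟨q, hq, rfl⟩ _ ⟨r, hr, rfl⟩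
      exact ⟨_, hcl q hq r hr, rfl⟩) T hT φ fun q hq => ⟨q, hq, rfl⟩
  refine ⟨z, hz, fun q hq => ?_⟩
  have hle : φ z ≤ φ q := hzinf ▸ T.inf'_le φ hq
  exact Prod.mk_le_mk.1 hle

lemma exists_greatest_of_union_inter_mem {α : Type*} [DecidableEq α]
    {T : Finset (Finset α × Finset α)} (hT : T.Nonempty)
    (hcl : ∀ q ∈ T, ∀ r ∈ T, (q.1 ∪ r.1, q.2 ∩ r.2) ∈ T) :
    ∃ w ∈ T, ∀ q ∈ T, q.1 ⊆ w.1 ∧ w.2 ⊆ q.2 := by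
  obtain ⟨z, hz, hzle⟩ := exists_least_of_inter_union_mem (hT.image Prod.swap) (by
    simp only [mem_image]
    rintro _ ⟨q, hq, rfl⟩ _ ⟨r, hr, rfl⟩
    exact ⟨_, hcl q hq r hr, rfl⟩)
  obtain ⟨w, hw, rfl⟩ := mem_image.1 hz
  exact ⟨w, hw, fun q hq => (hzle _ (mem_image_of_mem _ hq)).symm⟩

section TightPairs

variable [DecidableEq V] {E : Finset (V × V)} {d : V → ℕ} {B C : Finset V} {s : ℕ}

variable (E d B C) in
def tightPairs (s : ℕ) : Finset (Finset V × Finset V) :=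
  (B.powerset ×ˢ C.powerset).filter fun q => cutCapacity E d B C q.1 q.2 = s

lemma mem_tightPairs {q : Finset V × Finset V} :
    q ∈ tightPairs E d B C s ↔ q.1 ⊆ B ∧ q.2 ⊆ C ∧ cutCapacity E d B C q.1 q.2 = s := by
  simp [tightPairs, and_assoc]

lemma exists_pos_pos_of_one_le_cutCapacity
    (h : ∀ X ⊆ B, ∀ Y ⊆ C, 1 ≤ cutCapacity E d B C X Y) : ∃ e ∈ E, 1 ≤ d e.1 ∧ 1 ≤ d e.2 := by
  have hzero : ∀ A : Finset V, ∑ v ∈ A \ A.filter (d · ≠ 0), d v = 0 := fun A =>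
    sum_eq_zero fun v hv => by simp_all [mem_sdiff, mem_filter]
  have hpos := h _ (filter_subset (d · ≠ 0) B) _ (filter_subset (d · ≠ 0) C)
  rw [cutCapacity, hzero, hzero, add_zero, add_zero, Nat.one_le_iff_ne_zero,
    card_ne_zero] at hpos
  obtain ⟨e, he⟩ := hpos
  simp only [crossingPairs, mem_filter] at he
  exact ⟨e, he.1, Nat.one_le_iff_ne_zero.2 he.2.1.2, Nat.one_le_iff_ne_zero.2 he.2.2.2⟩

variable (hs : ∀ X ⊆ B, ∀ Y ⊆ C, s ≤ cutCapacity E d B C X Y)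
include hs

lemma inter_union_mem_tightPairs {q r : Finset V × Finset V} (hq : q ∈ tightPairs E d B C s)
    (hr : r ∈ tightPairs E d B C s) :
    (q.1 ∩ r.1, q.2 ∪ r.2) ∈ tightPairs E d B C s ∧
      (q.1 ∪ r.1, q.2 ∩ r.2) ∈ tightPairs E d B C s := by
  obtain ⟨hqB, hqC, hq⟩ := mem_tightPairs.1 hq
  obtain ⟨hrB, hrC, hr⟩ := mem_tightPairs.1 hr
  have hiB : q.1 ∩ r.1 ⊆ B := inter_subset_left.trans hqB
  have hiC : q.2 ∩ r.2 ⊆ C := inter_subset_left.trans hqC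
  have := hs _ hiB _ (union_subset hqC hrC)
  have := hs _ (union_subset hqB hrB) _ hiC
  have := cutCapacity_inter_union_add_le (E := E) (d := d) (B := B) (C := C) q.1 r.1 q.2 r.2
  exact ⟨mem_tightPairs.2 ⟨hiB, union_subset hqC hrC, by dsimp only; omega⟩,
    mem_tightPairs.2 ⟨union_subset hqB hrB, hiC, by dsimp only; omega⟩⟩

lemma le_card_crossingPairs_singleton_left {q : Finset V × Finset V}
    (hq : q ∈ tightPairs E d B C s) {b : V} (hbB : b ∈ B) (hbX : b ∉ q.1) :
    d b ≤ #(crossingPairs E {b} q.2) := by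
  obtain ⟨hqB, hqC, hq⟩ := mem_tightPairs.1 hq
  have := hs _ (insert_subset hbB hqB) _ hqC
  have := cutCapacity_insert_left (E := E) (d := d) (C := C) (Y := q.2) hbB hbX
  omega

lemma le_card_crossingPairs_singleton_right {q : Finset V × Finset V}
    (hq : q ∈ tightPairs E d B C s) {c : V} (hcC : c ∈ C) (hcY : c ∉ q.2) :
    d c ≤ #(crossingPairs E q.1 {c}) := by
  obtain ⟨hqB, hqC, hq⟩ := mem_tightPairs.1 hq
  have := hs _ hqB _ (insert_subset hcC hqC)
  have := cutCapacity_insert_right (E := E) (d := d) (B := B) (X := q.1) hcC hcY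
  omega

lemma card_crossingPairs_singleton_right_le {q : Finset V × Finset V}
    (hq : q ∈ tightPairs E d B C s) {c : V} (hc : c ∈ q.2) :
    #(crossingPairs E q.1 {c}) ≤ d c := by
  obtain ⟨hqB, hqC, hq⟩ := mem_tightPairs.1 hq
  have := hs _ hqB _ ((erase_subset c _).trans hqC)
  have := cutCapacity_erase_right (E := E) (d := d) (B := B) (X := q.1) hqC hc
  omega

lemma erase_left_mem_tightPairs {q : Finset V × Finset V} (hq : q ∈ tightPairs E d B C s)
    {b : V} (hb : b ∈ q.1) (hdb : d b = 0) : (q.1.erase b, q.2) ∈ tightPairs E d B C s := by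
  obtain ⟨hqB, hqC, hq⟩ := mem_tightPairs.1 hq
  have := hs _ ((erase_subset b _).trans hqB) _ hqC
  have := cutCapacity_erase_left (E := E) (d := d) (C := C) (Y := q.2) hqB hb
  exact mem_tightPairs.2 ⟨(erase_subset b _).trans hqB, hqC, by dsimp only; omega⟩

lemma erase_right_mem_tightPairs {q : Finset V × Finset V} (hq : q ∈ tightPairs E d B C s)
    {c : V} (hc : c ∈ q.2) (hdc : d c = 0) : (q.1, q.2.erase c) ∈ tightPairs E d B C s := by
  obtain ⟨hqB, hqC, hq⟩ := mem_tightPairs.1 hq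
  have := hs _ hqB _ ((erase_subset c _).trans hqC)
  have := cutCapacity_erase_right (E := E) (d := d) (B := B) (X := q.1) hqC hc
  exact mem_tightPairs.2 ⟨hqB, (erase_subset c _).trans hqC, by dsimp only; omega⟩

/-- Among the tight pairs avoiding `b`, the greatest one `w` yields the required pair `(b, c)` with
`c ∈ w.2`. -/
lemma exists_removable_of_tight_of_notMem {z : Finset V × Finset V}
    (hz : z ∈ tightPairs E d B C s) {b : V} (hbB : b ∈ B) (hbz : b ∉ z.1) (hdb : 1 ≤ d b) :
    ∃ e ∈ E, 1 ≤ d e.1 ∧ 1 ≤ d e.2 ∧ ∀ q ∈ tightPairs E d B C s, e.1 ∈ q.1 ∨ e.2 ∈ q.2 := by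
  set T := (tightPairs E d B C s).filter (b ∉ ·.1)
  have hcl : ∀ q ∈ T, ∀ r ∈ T, (q.1 ∪ r.1, q.2 ∩ r.2) ∈ T := by
    simp only [T, mem_filter, mem_union, not_or]
    exact fun q hq r hr => ⟨(inter_union_mem_tightPairs hs hq.1 hr.1).2, hq.2, hr.2⟩
  obtain ⟨w, hwT, hwle⟩ := exists_greatest_of_union_inter_mem ⟨z, mem_filter.2 ⟨hz, hbz⟩⟩ hcl
  obtain ⟨hw, hbw⟩ := mem_filter.1 hwT
  obtain ⟨e, he⟩ := card_pos.1 (hdb.trans (le_card_crossingPairs_singleton_left hs hw hbB hbw))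
  obtain ⟨heE, he1, he2⟩ := mem_filter.1 he
  rw [mem_singleton] at he1
  refine ⟨e, heE, he1 ▸ hdb, Nat.one_le_iff_ne_zero.2 fun hde => ?_, fun q hq => ?_⟩
  · have hwT' : (w.1, w.2.erase e.2) ∈ T :=
      mem_filter.2 ⟨erase_right_mem_tightPairs hs hw he2 hde, hbw⟩
    exact notMem_erase e.2 w.2 ((hwle _ hwT').2 he2)
  · by_cases hbq : b ∈ q.1
    · exact Or.inl (he1 ▸ hbq)
    · exact Or.inr ((hwle q (mem_filter.2 ⟨hq, hbq⟩)).2 he2)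

/-- The least tight pair `z` either sends an edge of `E` from `z.1` to a vertex of positive
capacity, which is then the required pair, or all of its capacity sits in `B \ z.1`. -/
theorem exists_removable_pair (hs₀ : s ≠ 0) :
    ∃ e ∈ E, 1 ≤ d e.1 ∧ 1 ≤ d e.2 ∧ ∀ q ∈ tightPairs E d B C s, e.1 ∈ q.1 ∨ e.2 ∈ q.2 := by
  rcases (tightPairs E d B C s).eq_empty_or_nonempty with hT | hT
  · obtain ⟨e, he, hd⟩ := exists_pos_pos_of_one_le_cutCapacity fun X hX Y hY =>
      (Nat.one_le_iff_ne_zero.2 hs₀).trans (hs X hX Y hY)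
    exact ⟨e, he, hd.1, hd.2, by simp [hT]⟩
  obtain ⟨z, hz, hzle⟩ := exists_least_of_inter_union_mem hT fun q hq r hr =>
    (inter_union_mem_tightPairs hs hq hr).1
  by_cases hA : ∃ e ∈ E, e.1 ∈ z.1 ∧ 1 ≤ d e.2
  · obtain ⟨e, heE, he1, hde⟩ := hA
    refine ⟨e, heE, Nat.one_le_iff_ne_zero.2 fun hd => ?_, hde,
      fun q hq => Or.inl ((hzle q hq).1 he1)⟩
    exact notMem_erase e.1 z.1 ((hzle _ (erase_left_mem_tightPairs hs hz he1 hd)).1 he1)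
  simp only [not_exists, not_and, not_le] at hA
  obtain ⟨hzB, hzC, hzs⟩ := mem_tightPairs.1 hz
  have hout : ∀ c ∈ C \ z.2, d c = 0 := fun c hc => by
    obtain ⟨hcC, hcz⟩ := mem_sdiff.1 hc
    by_contra hdc
    obtain ⟨e, he⟩ := card_pos.1 ((Nat.one_le_iff_ne_zero.2 hdc).trans
      (le_card_crossingPairs_singleton_right hs hz hcC hcz))
    obtain ⟨heE, he1, he2⟩ := mem_filter.1 he
    exact absurd (hA e heE he1) (by rw [mem_singleton.1 he2]; omega)
  have hin : crossingPairs E z.1 z.2 = ∅ := eq_empty_of_forall_notMem fun e he => by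
    obtain ⟨heE, he1, he2⟩ := mem_filter.1 he
    have hcard : 1 ≤ #(crossingPairs E z.1 {e.2}) :=
      card_pos.2 ⟨e, mem_filter.2 ⟨heE, he1, mem_singleton_self _⟩⟩
    have := card_crossingPairs_singleton_right_le hs hz he2
    have := hA e heE he1
    omega
  rw [cutCapacity, hin, sum_eq_zero hout, card_empty, zero_add, add_zero] at hzs
  obtain ⟨b, hb, hdb⟩ := exists_ne_zero_of_sum_ne_zero (hzs ▸ hs₀)
  exact exists_removable_of_tight_of_notMem hs hz (mem_sdiff.1 hb).1 (mem_sdiff.1 hb).2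
    (Nat.one_le_iff_ne_zero.2 hdb)

end TightPairs

lemma sum_update_pred_add {ι : Type*} [DecidableEq ι] (s : Finset ι) {f : ι → ℕ} {i : ι}
    (hi : 1 ≤ f i) :
    ∑ x ∈ s, Function.update f i (f i - 1) x + (if i ∈ s then 1 else 0) = ∑ x ∈ s, f x := by
  split_ifs with h
  · rw [sum_update_of_mem h, ← add_sum_erase s f h, sdiff_singleton_eq_erase]
    omega
  · rw [sum_update_of_notMem h, add_zero]

section DegreeBoundedSubset

variable [DecidableEq V] {E : Finset (V × V)} {d : V → ℕ} {B C : Finset V}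

lemma card_crossingPairs_erase_add {e : V × V} (he : e ∈ E) (X Y : Finset V) :
    #(crossingPairs (E.erase e) X Y) + (if e.1 ∈ X ∧ e.2 ∈ Y then 1 else 0) =
      #(crossingPairs E X Y) := by
  have herase : crossingPairs (E.erase e) X Y = (crossingPairs E X Y).erase e :=
    filter_erase _ _ _
  rw [herase]
  split_ifs with h
  · exact card_erase_add_one (mem_filter.2 ⟨he, h⟩)
  · have hnot : e ∉ crossingPairs E X Y := fun hm => h (mem_filter.1 hm).2
    rw [erase_eq_of_notMem hnot, add_zero]

lemma cutCapacity_erase_add {e : V × V} (he : e ∈ E) (he₁ : e.1 ∈ B) (he₂ : e.2 ∈ C)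
    (hBC : Disjoint B C) (hd₁ : 1 ≤ d e.1) (hd₂ : 1 ≤ d e.2) (X Y : Finset V) :
    cutCapacity (E.erase e)
        (Function.update (Function.update d e.1 (d e.1 - 1)) e.2 (d e.2 - 1)) B C X Y +
      ((if e.1 ∈ X ∧ e.2 ∈ Y then 1 else 0) + (if e.1 ∈ B \ X then 1 else 0) +
        (if e.2 ∈ C \ Y then 1 else 0)) = cutCapacity E d B C X Y := by
  have h₁₂ : e.1 ≠ e.2 := fun h => disjoint_left.1 hBC he₁ (h ▸ he₂)
  have hB := sum_update_pred_add (B \ X) hd₁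
  have hC := sum_update_pred_add (C \ Y) (f := Function.update d e.1 (d e.1 - 1)) (i := e.2)
    (by rwa [Function.update_of_ne h₁₂.symm])
  have he₁C : e.1 ∉ C \ Y := fun h => disjoint_left.1 hBC he₁ (mem_sdiff.1 h).1
  have he₂B : e.2 ∉ B \ X := fun h => disjoint_right.1 hBC he₂ (mem_sdiff.1 h).1
  rw [Function.update_of_ne h₁₂.symm, sum_update_of_notMem he₁C] at hC
  have hE := card_crossingPairs_erase_add he X Y
  simp only [cutCapacity]
  rw [sum_update_of_notMem he₂B]
  omega

lemma le_cutCapacity_erase (hBC : Disjoint B C) {e : V × V} (he : e ∈ E) (he₁ : e.1 ∈ B)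
    (he₂ : e.2 ∈ C) (hd₁ : 1 ≤ d e.1) (hd₂ : 1 ≤ d e.2) {t : ℕ}
    (h : ∀ X ⊆ B, ∀ Y ⊆ C, t + 1 ≤ cutCapacity E d B C X Y)
    (hmeet : ∀ q ∈ tightPairs E d B C (t + 1), e.1 ∈ q.1 ∨ e.2 ∈ q.2) {X Y : Finset V}
    (hX : X ⊆ B) (hY : Y ⊆ C) :
    t ≤ cutCapacity (E.erase e)
      (Function.update (Function.update d e.1 (d e.1 - 1)) e.2 (d e.2 - 1)) B C X Y := by
  have hcap := cutCapacity_erase_add he he₁ he₂ hBC hd₁ hd₂ X Y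
  have hle := h X hX Y hY
  -- the cut loses 2 only if it avoids both ends of `e`, and then it is not tight
  have htight := hmeet (X, Y)
  rw [mem_tightPairs] at htight
  by_cases h₁ : e.1 ∈ X <;> by_cases h₂ : e.2 ∈ Y <;>
    simp [h₁, h₂, he₁, he₂, hX, hY] at hcap htight <;> omega

theorem exists_subset_card_eq_of_le_cutCapacity (hBC : Disjoint B C)
    (hE : ∀ e ∈ E, e.1 ∈ B ∧ e.2 ∈ C) {t : ℕ} (h : ∀ X ⊆ B, ∀ Y ⊆ C, t ≤ cutCapacity E d B C X Y) :
    ∃ F ⊆ E, #F = t ∧ ∀ v, #(F.filter (·.1 = v)) ≤ d v ∧ #(F.filter (·.2 = v)) ≤ d v := by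
  induction t generalizing E d with
  | zero => exact ⟨∅, empty_subset _, card_empty, by simp⟩
  | succ t ih =>
    obtain ⟨e, heE, hd₁, hd₂, hmeet⟩ := exists_removable_pair h t.succ_ne_zero
    obtain ⟨he₁, he₂⟩ := hE e heE
    have h₁₂ : e.1 ≠ e.2 := fun h => disjoint_left.1 hBC he₁ (h ▸ he₂)
    obtain ⟨F, hFE, hF, hFd⟩ := ih (fun e' he' => hE e' (mem_of_mem_erase he'))
      fun X hX Y hY => le_cutCapacity_erase hBC heE he₁ he₂ hd₁ hd₂ h hmeet hX hY
    have heF : e ∉ F := fun h => notMem_erase e E (hFE h)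
    have hcard : ∀ (p : V × V → Prop) [DecidablePred p],
        #((insert e F).filter p) = #(F.filter p) + if p e then 1 else 0 := fun p _ => by
      rw [card_filter, sum_insert heF, ← card_filter, add_comm]
    refine ⟨insert e F, insert_subset heE (hFE.trans (erase_subset e E)),
      by rw [card_insert_of_notMem heF, hF], fun v => ?_⟩
    rw [hcard, hcard]
    have hFv := hFd v
    rw [Function.update_apply, Function.update_apply] at hFv
    rcases eq_or_ne v e.1 with rfl | hv₁
    · simp only [if_neg h₁₂.symm, if_neg h₁₂, ↓reduceIte] at hFv ⊢
      omega
    rcases eq_or_ne v e.2 with rfl | hv₂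
    · simp only [if_neg h₁₂, ↓reduceIte] at hFv ⊢
      omega
    simp only [if_neg hv₁, if_neg hv₂, if_neg hv₁.symm, if_neg hv₂.symm] at hFv ⊢
    omega

end DegreeBoundedSubset

section MatrixCompletion

variable {ι : Type*} [Fintype ι]

lemma eq_of_forall_le_of_card_mul_le_sum {f : ι → ℕ} {p : ℕ} (hf : ∀ i, f i ≤ p)
    (hsum : Fintype.card ι * p ≤ ∑ i, f i) (i : ι) : f i = p := by
  have hconst : ∑ _i : ι, p = Fintype.card ι * p := by rw [sum_const, card_univ, smul_eq_mul]
  have hle : ∑ i, f i ≤ ∑ _i : ι, p := sum_le_sum fun i _ => hf i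
  exact (sum_eq_sum_iff_of_le fun i _ => hf i).1 (by omega) i (mem_univ i)

lemma exists_lt_of_sum_lt_card_mul {f : ι → ℕ} {p : ℕ} (hsum : ∑ i, f i < Fintype.card ι * p) :
    ∃ i, f i < p := by
  have hconst : ∑ _i : ι, p = Fintype.card ι * p := by rw [sum_const, card_univ, smul_eq_mul]
  obtain ⟨i, -, hi⟩ := exists_lt_of_sum_lt (hconst ▸ hsum)
  exact ⟨i, hi⟩

theorem exists_le_of_row_col_sum_le [DecidableEq ι] {p : ℕ} (m : ι → ι → ℕ)
    (hrow : ∀ i, ∑ j, m i j ≤ p) (hcol : ∀ j, ∑ i, m i j ≤ p) :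
    ∃ m' : ι → ι → ℕ, m ≤ m' ∧ (∀ i, ∑ j, m' i j = p) ∧ ∀ j, ∑ i, m' i j = p := by
  induction hD : Fintype.card ι * p - ∑ i, ∑ j, m i j generalizing m with
  | zero =>
    have htot : Fintype.card ι * p ≤ ∑ i, ∑ j, m i j := by omega
    exact ⟨m, le_rfl, eq_of_forall_le_of_card_mul_le_sum hrow htot,
      eq_of_forall_le_of_card_mul_le_sum hcol (by rwa [sum_comm])⟩
  | succ D ih =>
    have hlt : ∑ i, ∑ j, m i j < Fintype.card ι * p := by omega
    obtain ⟨i₀, hi₀⟩ := exists_lt_of_sum_lt_card_mul hlt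
    obtain ⟨j₀, hj₀⟩ := exists_lt_of_sum_lt_card_mul (f := fun j => ∑ i, m i j) (by rwa [sum_comm])
    set m₁ : ι → ι → ℕ := fun i j => m i j + if i = i₀ ∧ j = j₀ then 1 else 0
    have hrow₁ : ∀ i, ∑ j, m₁ i j = ∑ j, m i j + if i = i₀ then 1 else 0 := fun i => by
      by_cases hi : i = i₀ <;> simp [m₁, sum_add_distrib, hi]
    have hcol₁ : ∀ j, ∑ i, m₁ i j = ∑ i, m i j + if j = j₀ then 1 else 0 := fun j => by
      by_cases hj : j = j₀ <;> simp [m₁, sum_add_distrib, hj]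
    have htot₁ : ∑ i, ∑ j, m₁ i j = ∑ i, ∑ j, m i j + 1 := by
      simp only [hrow₁, sum_add_distrib, sum_ite_eq', mem_univ, if_true]
    obtain ⟨m', hle, hm'⟩ := ih m₁
      (fun i => by rw [hrow₁]; split_ifs with hi <;> [exact hi ▸ hi₀; simpa using hrow i])
      (fun j => by rw [hcol₁]; split_ifs with hj <;> [exact hj ▸ hj₀; simpa using hcol j])
      (by omega)
    exact ⟨m', fun i j => (Nat.le_add_right _ _).trans (hle i j), hm'⟩

end MatrixCompletion

section PermDecomposition

variable {ι : Type*} [Fintype ι] [DecidableEq ι]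

/-- Hall's condition holds because a set `s` of rows carries mass `p * #s`, all of it in the
columns that meet `s`, each of which carries mass `p`. -/
lemma exists_perm_pos_of_row_col_sum_eq {p : ℕ} (hp : 0 < p) (m : ι → ι → ℕ)
    (hrow : ∀ i, ∑ j, m i j = p) (hcol : ∀ j, ∑ i, m i j = p) :
    ∃ σ : Equiv.Perm ι, ∀ i, 0 < m i (σ i) := by
  set N : ι → Finset ι := fun i => univ.filter (0 < m i ·)
  have hall : ∀ s : Finset ι, #s ≤ #(s.biUnion N) := fun s => by
    refine Nat.le_of_mul_le_mul_left ?_ hp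
    calc p * #s = ∑ i ∈ s, ∑ j, m i j := by rw [sum_congr rfl fun i _ => hrow i, sum_const,
            smul_eq_mul, mul_comm]
      _ = ∑ i ∈ s, ∑ j ∈ s.biUnion N, m i j := sum_congr rfl fun i hi =>
          (sum_subset (subset_univ _) fun j _ hj => by
            by_contra hne
            exact hj (mem_biUnion.2 ⟨i, hi, by simp [N]; omega⟩)).symm
      _ = ∑ j ∈ s.biUnion N, ∑ i ∈ s, m i j := sum_comm
      _ ≤ ∑ j ∈ s.biUnion N, ∑ i, m i j :=
          sum_le_sum fun j _ => sum_le_sum_of_subset (subset_univ s)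
      _ = p * #(s.biUnion N) := by rw [sum_congr rfl fun j _ => hcol j, sum_const,
            smul_eq_mul, mul_comm]
  obtain ⟨g, hg, hgN⟩ := (all_card_le_biUnion_card_iff_exists_injective N).1 hall
  exact ⟨Equiv.ofBijective g (Finite.injective_iff_bijective.1 hg),
    fun i => (mem_filter.1 (hgN i)).2⟩

theorem exists_perms_of_row_col_sum_eq (p : ℕ) (m : ι → ι → ℕ) (hrow : ∀ i, ∑ j, m i j = p)
    (hcol : ∀ j, ∑ i, m i j = p) :
    ∃ σ : Fin p → Equiv.Perm ι, ∀ i j, m i j ≤ #(univ.filter fun k => σ k i = j) := by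
  induction p generalizing m with
  | zero =>
    refine ⟨Fin.elim0, fun i j => ?_⟩
    have := single_le_sum (fun j _ => Nat.zero_le (m i j)) (mem_univ j)
    rw [hrow i] at this
    omega
  | succ p ih =>
    obtain ⟨σ₀, hσ₀⟩ := exists_perm_pos_of_row_col_sum_eq p.succ_pos m hrow hcol
    set m' : ι → ι → ℕ := fun i j => m i j - if σ₀ i = j then 1 else 0
    have hm' : ∀ i j, m' i j + (if σ₀ i = j then 1 else 0) = m i j := fun i j => by
      simp only [m']
      split_ifs with h
      · have := hσ₀ i
        subst h
        omega
      · omega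
    have hrow' : ∀ i, ∑ j, m' i j = p := fun i => by
      have := hrow i
      rw [← sum_congr rfl fun j _ => hm' i j, sum_add_distrib, sum_ite_eq,
        if_pos (mem_univ _)] at this
      omega
    have hcol' : ∀ j, ∑ i, m' i j = p := fun j => by
      have := hcol j
      rw [← sum_congr rfl fun i _ => hm' i j, sum_add_distrib] at this
      simp only [← Equiv.eq_symm_apply, sum_ite_eq', mem_univ, if_true] at this
      omega
    obtain ⟨σ, hσ⟩ := ih m' hrow' hcol'
    refine ⟨Fin.cons σ₀ σ, fun i j => ?_⟩
    have hcount : #(univ.filter fun k => (Fin.cons σ₀ σ : Fin (p + 1) → Equiv.Perm ι) k i = j) =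
        (if σ₀ i = j then 1 else 0) + #(univ.filter fun k => σ k i = j) := by
      simp only [card_filter, Fin.sum_univ_succ, Fin.cons_zero, Fin.cons_succ]
    have := hσ i j
    have := hm' i j
    omega

end PermDecomposition

/-- König's edge colouring theorem, for the bipartite graph with two copies of `ι` as its sides
and `F` as its edges. -/
theorem exists_colouring_of_card_filter_le {ι : Type*} [Fintype ι] [DecidableEq ι] {p : ℕ}
    (hp : 0 < p) (F : Finset (ι × ι)) (hrow : ∀ i, #(F.filter (·.1 = i)) ≤ p)
    (hcol : ∀ j, #(F.filter (·.2 = j)) ≤ p) :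
    ∃ c : ι × ι → Fin p, ∀ e ∈ F, ∀ e' ∈ F, c e = c e' → e.1 = e'.1 ∨ e.2 = e'.2 → e = e' := by
  set m : ι → ι → ℕ := fun i j => if (i, j) ∈ F then 1 else 0
  have hrow_m : ∀ i, ∑ j, m i j = #(F.filter (·.1 = i)) := fun i => by
    rw [← card_filter]
    refine card_nbij' (fun j => (i, j)) Prod.snd ?_ ?_ ?_ ?_ <;> intro x <;> aesop
  have hcol_m : ∀ j, ∑ i, m i j = #(F.filter (·.2 = j)) := fun j => by
    rw [← card_filter]
    refine card_nbij' (fun i => (i, j)) Prod.fst ?_ ?_ ?_ ?_ <;> intro x <;> aesop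
  obtain ⟨m', hmm', hrow', hcol'⟩ := exists_le_of_row_col_sum_le m
    (fun i => (hrow_m i).trans_le (hrow i)) (fun j => (hcol_m j).trans_le (hcol j))
  obtain ⟨σ, hσ⟩ := exists_perms_of_row_col_sum_eq p m' hrow' hcol'
  have hcover : ∀ e : ι × ι, ∃ k : Fin p, e ∈ F → σ k e.1 = e.2 := fun e => by
    by_cases he : e ∈ F
    · have hpos : 0 < #(univ.filter fun k => σ k e.1 = e.2) :=
        (show 1 ≤ m e.1 e.2 by simp [m, he]).trans ((hmm' e.1 e.2).trans (hσ e.1 e.2))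
      obtain ⟨k, hk⟩ := card_pos.1 hpos
      exact ⟨k, fun _ => (mem_filter.1 hk).2⟩
    · exact ⟨⟨0, hp⟩, fun h => absurd h he⟩
  choose c hc using hcover
  refine ⟨c, fun e he e' he' hcc hshare => ?_⟩
  have h₁ := hc e he
  have h₂ := hc e' he'
  rw [hcc] at h₁
  rcases hshare with hshare | hshare
  · exact Prod.ext hshare (h₁.symm.trans (hshare ▸ h₂))
  · exact Prod.ext ((σ (c e')).injective (h₁.trans (hshare.trans h₂.symm))) hshare

lemma injOn_uncurry_sym2Mk_of_disjoint {B C : Set V} (hBC : Disjoint B C) :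
    Set.InjOn (Function.uncurry Sym2.mk) (B ×ˢ C) := by
  rintro ⟨a, b⟩ ⟨ha, -⟩ ⟨a', b'⟩ ⟨-, hb'⟩ h
  rcases Sym2.eq_iff.1 (h : s(a, b) = s(a', b')) with ⟨rfl, rfl⟩ | ⟨rfl, -⟩
  · rfl
  · exact absurd hb' (Set.disjoint_left.1 hBC ha)

lemma isMatchingIn_image_sym2Mk {G : SimpleGraph V} {B C : Set V} (hBC : Disjoint B C)
    {S : Set (V × V)} (hS : ∀ e ∈ S, G.Adj e.1 e.2 ∧ e.1 ∈ B ∧ e.2 ∈ C)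
    (hinj : ∀ e ∈ S, ∀ e' ∈ S, e.1 = e'.1 ∨ e.2 = e'.2 → e = e') :
    IsMatchingIn G.edgeSet (Function.uncurry Sym2.mk '' S) := by
  refine ⟨by rintro _ ⟨e, he, rfl⟩; exact (hS e he).1, ?_⟩
  rintro _ ⟨e, he, rfl⟩ _ ⟨e', he', rfl⟩ hne v hv hv'
  obtain ⟨-, he₁, he₂⟩ := hS e he
  obtain ⟨-, he₁', he₂'⟩ := hS e' he'
  rcases Sym2.mem_iff.1 hv with rfl | rfl <;> rcases Sym2.mem_iff.1 hv' with h | h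
  · exact hne (congrArg (Function.uncurry Sym2.mk) (hinj e he e' he' (Or.inl h)))
  · exact Set.disjoint_left.1 hBC he₁ (h ▸ he₂')
  · exact Set.disjoint_left.1 hBC he₁' (h ▸ he₂)
  · exact hne (congrArg (Function.uncurry Sym2.mk) (hinj e he e' he' (Or.inr h)))

section CrossingArcs

variable {G : SimpleGraph V} [DecidableRel G.Adj] {B C : Finset V}

variable (G B C) in
def crossingArcs : Finset (V × V) :=
  (B ×ˢ C).filter fun e => G.Adj e.1 e.2

lemma mem_crossingArcs {e : V × V} :
    e ∈ crossingArcs G B C ↔ G.Adj e.1 e.2 ∧ e.1 ∈ B ∧ e.2 ∈ C := by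
  simp [crossingArcs, and_comm, and_assoc]

lemma ncard_edgesBetween [DecidableEq V] (hBC : Disjoint B C) {X Y : Finset V} (hX : X ⊆ B)
    (hY : Y ⊆ C) :
    (edgesBetween G ↑X ↑Y).ncard = #(crossingPairs (crossingArcs G B C) X Y) := by
  have himage : edgesBetween G ↑X ↑Y =
      Function.uncurry Sym2.mk '' ↑(crossingPairs (crossingArcs G B C) X Y) := by
    ext e
    simp only [edgesBetween, crossingPairs, Set.mem_ofPred_eq, coe_filter, Set.mem_image,
      mem_crossingArcs, mem_coe]
    constructor
    · rintro ⟨he, u, hu, w, hw, rfl⟩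
      exact ⟨(u, w), ⟨⟨he, hX hu, hY hw⟩, hu, hw⟩, rfl⟩
    · rintro ⟨e, ⟨⟨he, -⟩, hu, hw⟩, rfl⟩
      exact ⟨he, e.1, hu, e.2, hw, rfl⟩
  have hinj : Set.InjOn (Function.uncurry Sym2.mk) ↑(crossingPairs (crossingArcs G B C) X Y) :=
    (injOn_uncurry_sym2Mk_of_disjoint (disjoint_coe.2 hBC)).mono fun e he => by
      simp only [crossingPairs, coe_filter, mem_crossingArcs] at he
      exact ⟨he.1.2.1, he.1.2.2⟩
  rw [himage, hinj.ncard_image, Set.ncard_coe_finset]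

end CrossingArcs

theorem exists_matchings_of_le_cutCapacity [Fintype V] [DecidableEq V] {G : SimpleGraph V}
    [DecidableRel G.Adj] {B C : Finset V} (hBC : Disjoint B C) {p t : ℕ} (hp : 0 < p)
    (h : ∀ X ⊆ B, ∀ Y ⊆ C, t ≤ cutCapacity (crossingArcs G B C) (fun _ => p) B C X Y) :
    ∃ M : Fin p → Set (Sym2 V), (∀ i, IsMatchingIn G.edgeSet (M i)) ∧
      (∀ i j, i ≠ j → Disjoint (M i) (M j)) ∧ ∑ i, (M i).ncard = t := by
  obtain ⟨F, hFE, hFt, hFdeg⟩ := exists_subset_card_eq_of_le_cutCapacity hBC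
    (fun e he => (mem_crossingArcs.1 he).2) h
  have hF : ∀ e ∈ F, G.Adj e.1 e.2 ∧ e.1 ∈ B ∧ e.2 ∈ C := fun e he =>
    mem_crossingArcs.1 (hFE he)
  have hinj : Set.InjOn (Function.uncurry Sym2.mk) ↑F :=
    (injOn_uncurry_sym2Mk_of_disjoint (disjoint_coe.2 hBC)).mono fun e he => (hF e he).2
  obtain ⟨c, hc⟩ := exists_colouring_of_card_filter_le hp F (fun v => (hFdeg v).1)
    (fun v => (hFdeg v).2)
  refine ⟨fun k => Function.uncurry Sym2.mk '' ↑(F.filter (c · = k)), fun k => ?_,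
    fun i j hij => ?_, ?_⟩
  · refine isMatchingIn_image_sym2Mk (disjoint_coe.2 hBC) (fun e he => ?_) fun e he e' he' => ?_
    · exact hF e (mem_filter.1 he).1
    · simp only [coe_filter, Set.mem_ofPred_eq] at he he'
      exact hc e he.1 e' he'.1 (he.2.trans he'.2.symm)
  · refine Set.disjoint_left.2 ?_
    rintro _ ⟨e, he, rfl⟩ ⟨e', he', hee'⟩
    simp only [coe_filter, Set.mem_ofPred_eq] at he he'
    exact hij (he.2.symm.trans ((hinj he'.1 he.1 hee') ▸ he'.2))
  · simp only [(hinj.mono (coe_subset.2 (filter_subset _ F))).ncard_image, Set.ncard_coe_finset]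
    rw [← card_eq_sum_card_fiberwise fun e _ => mem_univ (c e), hFt]

theorem maoCheng_matchings_iff_general [Fintype V] (G : SimpleGraph V)
    (B C : Set V) (hunion : B ∪ C = Set.univ) (hdisj : Disjoint B C)
    (hB : ∀ u ∈ B, ∀ v ∈ B, ¬G.Adj u v) (hC : ∀ u ∈ C, ∀ v ∈ C, ¬G.Adj u v)
    (p t : ℕ) (hp : 0 < p) :
    (∃ M : Fin p → Set (Sym2 V),
        (∀ i, IsMatchingIn G.edgeSet (M i)) ∧
        (∀ i j, i ≠ j → Disjoint (M i) (M j)) ∧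
        ∑ i, (M i).ncard = t) ↔
      ∀ B'' ⊆ B, ∀ C'' ⊆ C,
        (edgesBetween G B'' C'').ncard +
          p * (B.ncard + C.ncard - B''.ncard - C''.ncard) ≥ t := by
  classical
  have hcard : ∀ B'' ⊆ B, ∀ C'' ⊆ C,
      B.ncard + C.ncard - B''.ncard - C''.ncard = (B \ B'').ncard + (C \ C'').ncard :=
    fun B'' hB'' C'' hC'' => by
      rw [Set.ncard_sdiff hB'', Set.ncard_sdiff hC'']
      have := Set.ncard_le_ncard hB''
      have := Set.ncard_le_ncard hC''
      omega
  constructor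
  · rintro ⟨M, hM, hMdisj, rfl⟩ B'' hB'' C'' hC''
    rw [hcard B'' hB'' C'' hC'']
    exact sum_ncard_le_of_isMatchingIn hunion hB hC hM hMdisj B'' C''
  · intro h
    have hdisj' : Disjoint B.toFinset C.toFinset := Set.disjoint_toFinset.2 hdisj
    refine exists_matchings_of_le_cutCapacity hdisj' hp fun X hX Y hY => ?_
    have hXB : (X : Set V) ⊆ B := by simpa using hX
    have hYC : (Y : Set V) ⊆ C := by simpa using hY
    have := h X hXB Y hYC
    rw [hcard _ hXB _ hYC, ncard_edgesBetween hdisj' hX hY] at this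
    convert this using 1
    simp only [cutCapacity, sum_const, smul_eq_mul, ← Set.ncard_coe_finset, coe_sdiff,
      Set.coe_toFinset]
    ring

/-- **(Mao Cheng)** Let `p, t` be positive integers and let `G` be a finite bipartite
graph with parts `B` and `C`. There exist `p` pairwise edge-disjoint matchings in `G`
whose cardinalities sum to `t` if and only if for all `B'' ⊆ B` and all `C'' ⊆ C`,
`|∂(B'') ∩ ∂(C'')| + p·(|B| + |C| − |B''| − |C''|) ≥ t`. -/
theorem maoCheng_matchings_iff [Fintype V] (G : SimpleGraph V)
    (B C : Set V) (hunion : B ∪ C = Set.univ) (hdisj : Disjoint B C)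
    (hB : ∀ u ∈ B, ∀ v ∈ B, ¬G.Adj u v) (hC : ∀ u ∈ C, ∀ v ∈ C, ¬G.Adj u v)
    (p t : ℕ) (hp : 0 < p) (ht : 0 < t) :
    (∃ M : Fin p → Set (Sym2 V),
        (∀ i, IsMatchingIn G.edgeSet (M i)) ∧
        (∀ i j, i ≠ j → Disjoint (M i) (M j)) ∧
        ∑ i, (M i).ncard = t) ↔
      ∀ B'' ⊆ B, ∀ C'' ⊆ C,
        (edgesBetween G B'' C'').ncard +
          p * (B.ncard + C.ncard - B''.ncard - C''.ncard) ≥ t :=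
  maoCheng_matchings_iff_general G B C hunion hdisj hB hC p t hp
end

section
/- Let G = (A,B,C;E) be a bilaterally-complete tripartite graph with complete sides G[A∪B] and G[A∪C] and |A| = p. Then τ△(G) equals the minimum, over all B″ ⊆ B and C″ ⊆ C, of |E_{B″C″}| + p(|B| + |C| − |B″| − |C″|), where E_{B″C″} is the set of edges of G with one endpoint in B″ and the other in C″. -/
open SimpleGraph

variable {V : Type*}

/-!
Upper bound: for `B'' ⊆ B` and `C'' ⊆ C`, every triangle `abc` (`a ∈ A`, `b ∈ B`, `c ∈ C`)
contains `bc` with `b ∈ B''`, `c ∈ C''`, or `ab` with `b ∉ B''`, or `ac` with `c ∉ C''`; as the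
sides `AB` and `AC` are complete, these edges number `|E_{B''C''}| + p (|B \ B''| + |C \ C''|)`.

Lower bound: let `E'` be a transversal and `d v` the number of edges of `E'` from `v` to `A`.
For a threshold `θ < p` let `B'' = {b | d b ≤ θ}` and `C'' = {c | d c + θ < p}`. If `b ∈ B''` and
`c ∈ C''` are adjacent then `d b + d c < p`, so some `a ∈ A` has `ab, ac ∉ E'`, whence `bc ∈ E'`.
Over all `θ < p`, a vertex `v` is left out of `B''` or `C''` exactly `d v` times (layer cake), so
the `p` costs add up to at most `p |E' ∩ E_BC| + p |E' ∩ (E_AB ∪ E_AC)| ≤ p |E'|`, and one of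
them is at most `|E'|`.
-/

open Finset

lemma ncard_add_ncard_sub_ncard_sub_ncard [Finite V] {B C B'' C'' : Set V} (hB'' : B'' ⊆ B)
    (hC'' : C'' ⊆ C) :
    B.ncard + C.ncard - B''.ncard - C''.ncard = (B \ B'').ncard + (C \ C'').ncard := by
  have := Set.ncard_le_ncard hB''
  have := Set.ncard_le_ncard hC''
  rw [Set.ncard_sdiff hB'', Set.ncard_sdiff hC'']
  omega

lemma sum_ncard_sep_eq_finsum_card_filter {α ι : Type*} {W : Set α} (hW : W.Finite)
    (s : Finset ι) (r : ι → α → Prop) [∀ i w, Decidable (r i w)] :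
    ∑ i ∈ s, {w ∈ W | r i w}.ncard = ∑ᶠ w ∈ W, #{i ∈ s | r i w} := by
  simp only [finsum_mem_eq_finite_toFinset_sum _ hW, card_filter]
  rw [sum_comm]
  refine sum_congr rfl fun i _ => ?_
  rw [Set.ncard_eq_toFinset_card _ (hW.subset (Set.sep_subset _ _)), ← card_filter]
  congr 1
  ext w
  simp

lemma mem_triangleEdges {t : Finset V} {u v : V} (hu : u ∈ t) (hv : v ∈ t) (huv : u ≠ v) :
    s(u, v) ∈ triangleEdges t :=
  ⟨u, hu, v, hv, huv, rfl⟩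

lemma eq_or_eq_or_eq_of_mem_triangleEdges [DecidableEq V] {a b c : V} {e : Sym2 V}
    (he : e ∈ triangleEdges {a, b, c}) : e = s(a, b) ∨ e = s(a, c) ∨ e = s(b, c) := by
  obtain ⟨u, hu, v, hv, huv, rfl⟩ := he
  simp only [mem_insert, mem_singleton] at hu hv
  rcases hu with rfl | rfl | rfl <;> rcases hv with rfl | rfl | rfl <;> simp_all [Sym2.eq_swap]

lemma IsTriTransversal.mem_of_notMem_of_notMem [DecidableEq V] {G : SimpleGraph V}
    {E' : Set (Sym2 V)} (hE' : IsTriTransversal G E') {a b c : V} (habc : G.IsNClique 3 {a, b, c})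
    (hab : s(a, b) ∉ E') (hac : s(a, c) ∉ E') : s(b, c) ∈ E' := by
  obtain ⟨e, he, heE'⟩ := hE'.2 _ habc
  rcases eq_or_eq_or_eq_of_mem_triangleEdges he with rfl | rfl | rfl <;> tauto

lemma IsTripartition.exists_eq_triple_of_isNClique [DecidableEq V] {G : SimpleGraph V}
    {A B C : Set V} (hpart : IsTripartition G A B C) {t : Finset V} (ht : G.IsNClique 3 t) :
    ∃ a ∈ A, ∃ b ∈ B, ∃ c ∈ C, t = {a, b, c} := by
  obtain ⟨hcover, -, -, -, hA, hB, hC⟩ := hpart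
  obtain ⟨x, y, z, -, -, -, rfl⟩ := card_eq_three.mp ht.2
  obtain ⟨hxy, hxz, hyz⟩ := is3Clique_triple_iff.mp ht
  have hmem : ∀ v, v ∈ A ∨ v ∈ B ∨ v ∈ C := fun v => by
    simpa [or_assoc] using Set.eq_univ_iff_forall.mp hcover v
  rcases hmem x with hx | hx | hx <;> rcases hmem y with hy | hy | hy <;>
    rcases hmem z with hz | hz | hz <;>
    first
    | exact ⟨_, ‹_›, _, ‹_›, _, ‹_›, by
        ext; simp only [mem_insert, mem_singleton]; tauto⟩
    | grind

section edgesBetween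

variable {G : SimpleGraph V} {M W M' W' : Set V}

lemma edgesBetween_comm (G : SimpleGraph V) (M W : Set V) :
    edgesBetween G M W = edgesBetween G W M := by
  ext e
  constructor <;> rintro ⟨he, u, hu, w, hw, rfl⟩ <;> exact ⟨he, w, hw, u, hu, Sym2.eq_swap⟩

lemma disjoint_edgesBetween_of_disjoint_right (hW : Disjoint W (M' ∪ W')) :
    Disjoint (edgesBetween G M W) (edgesBetween G M' W') := by
  rw [Set.disjoint_left]
  rintro e ⟨-, u, -, w, hw, rfl⟩ ⟨-, x, hx, y, hy, hxy⟩
  rcases Sym2.eq_iff.mp hxy with ⟨-, rfl⟩ | ⟨-, rfl⟩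
  · exact Set.disjoint_left.mp hW hw (Or.inr hy)
  · exact Set.disjoint_left.mp hW hw (Or.inl hx)

lemma disjoint_edgesBetween_of_disjoint_left (hM : Disjoint M (M' ∪ W')) :
    Disjoint (edgesBetween G M W) (edgesBetween G M' W') :=
  edgesBetween_comm G M W ▸ disjoint_edgesBetween_of_disjoint_right hM

lemma ncard_edgesBetween_of_forall_adj [Finite V] (hadj : ∀ u ∈ M, ∀ w ∈ W, G.Adj u w)
    (hMW : Disjoint M W) : (edgesBetween G M W).ncard = M.ncard * W.ncard := by
  have himage : edgesBetween G M W = (fun q : V × V => s(q.1, q.2)) '' M ×ˢ W := by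
    ext e
    constructor
    · rintro ⟨-, u, hu, w, hw, rfl⟩
      exact ⟨(u, w), ⟨hu, hw⟩, rfl⟩
    · rintro ⟨⟨u, w⟩, ⟨hu, hw⟩, rfl⟩
      exact ⟨hadj u hu w hw, u, hu, w, hw, rfl⟩
  have hinj : Set.InjOn (fun q : V × V => s(q.1, q.2)) (M ×ˢ W) := by
    rintro ⟨u, w⟩ ⟨hu, -⟩ ⟨x, y⟩ ⟨-, hy⟩ h
    rcases Sym2.eq_iff.mp h with ⟨rfl, rfl⟩ | ⟨rfl, -⟩
    · rfl
    · exact (Set.disjoint_left.mp hMW hu hy).elim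
  rw [himage, hinj.ncard_image, Set.ncard_prod]

end edgesBetween

def tripartiteTransversal (G : SimpleGraph V) (A B C B'' C'' : Set V) : Set (Sym2 V) :=
  edgesBetween G B'' C'' ∪ edgesBetween G A (B \ B'') ∪ edgesBetween G A (C \ C'')

section tripartite

variable {G : SimpleGraph V} {A B C : Set V}

lemma isTriTransversal_tripartiteTransversal (hpart : IsTripartition G A B C) (B'' C'' : Set V) :
    IsTriTransversal G (tripartiteTransversal G A B C B'' C'') := by
  classical
  refine ⟨by rintro e ((⟨he, -⟩ | ⟨he, -⟩) | ⟨he, -⟩) <;> exact he, fun t ht => ?_⟩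
  obtain ⟨a, ha, b, hb, c, hc, rfl⟩ := hpart.exists_eq_triple_of_isNClique ht
  obtain ⟨hab, hac, hbc⟩ := is3Clique_triple_iff.mp ht
  by_cases hb'' : b ∈ B''
  · by_cases hc'' : c ∈ C''
    · exact ⟨s(b, c), mem_triangleEdges (by simp) (by simp) hbc.ne,
        .inl (.inl ⟨hbc, b, hb'', c, hc'', rfl⟩)⟩
    · exact ⟨s(a, c), mem_triangleEdges (by simp) (by simp) hac.ne,
        .inr ⟨hac, a, ha, c, ⟨hc, hc''⟩, rfl⟩⟩
  · exact ⟨s(a, b), mem_triangleEdges (by simp) (by simp) hab.ne,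
      .inl (.inr ⟨hab, a, ha, b, ⟨hb, hb''⟩, rfl⟩)⟩

lemma ncard_tripartiteTransversal [Finite V] (hpart : IsTripartition G A B C)
    (hAB : CompleteSide G A B) (hAC : CompleteSide G A C) (B'' : Set V) {C'' : Set V}
    (hC'' : C'' ⊆ C) :
    (tripartiteTransversal G A B C B'' C'').ncard =
      (edgesBetween G B'' C'').ncard + A.ncard * ((B \ B'').ncard + (C \ C'').ncard) := by
  obtain ⟨-, hdAB, hdAC, hdBC, -⟩ := hpart
  have hBC'' : Disjoint (edgesBetween G B'' C'') (edgesBetween G A (B \ B'')) :=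
    disjoint_edgesBetween_of_disjoint_right <| Set.disjoint_union_right.mpr
      ⟨hdAC.symm.mono_left hC'', hdBC.symm.mono hC'' Set.sdiff_subset⟩
  have hCC'' : Disjoint (edgesBetween G B'' C'') (edgesBetween G A (C \ C'')) :=
    disjoint_edgesBetween_of_disjoint_right <| Set.disjoint_union_right.mpr
      ⟨hdAC.symm.mono_left hC'', Set.disjoint_sdiff_right⟩
  have hBC : Disjoint (edgesBetween G A (B \ B'')) (edgesBetween G A (C \ C'')) :=
    disjoint_edgesBetween_of_disjoint_right <| Set.disjoint_union_right.mpr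
      ⟨hdAB.symm.mono_left Set.sdiff_subset, hdBC.mono Set.sdiff_subset Set.sdiff_subset⟩
  rw [tripartiteTransversal, Set.ncard_union_eq (Set.disjoint_union_left.mpr ⟨hCC'', hBC⟩),
    Set.ncard_union_eq hBC'',
    ncard_edgesBetween_of_forall_adj (fun a ha b hb => hAB a ha b hb.1)
      (hdAB.mono_right Set.sdiff_subset),
    ncard_edgesBetween_of_forall_adj (fun a ha c hc => hAC a ha c hc.1)
      (hdAC.mono_right Set.sdiff_subset)]
  ring

end tripartite

noncomputable def degIn (E' : Set (Sym2 V)) (A : Set V) (v : V) : ℕ :=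
  {a ∈ A | s(a, v) ∈ E'}.ncard

section degIn

variable {G : SimpleGraph V} {E' : Set (Sym2 V)} {M W : Set V}

lemma ncard_inter_edgesBetween [Finite V] (hE' : E' ⊆ G.edgeSet) (hMW : Disjoint M W) :
    (E' ∩ edgesBetween G M W).ncard = ∑ᶠ w ∈ W, degIn E' M w := by
  have hunion : E' ∩ edgesBetween G M W = ⋃ w ∈ W, (s(·, w)) '' {a ∈ M | s(a, w) ∈ E'} := by
    ext e
    simp only [Set.mem_inter_iff, Set.mem_iUnion, Set.mem_image, Set.mem_sep_iff]
    constructor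
    · rintro ⟨he, -, u, hu, w, hw, rfl⟩
      exact ⟨w, hw, u, ⟨hu, he⟩, rfl⟩
    · rintro ⟨w, hw, u, ⟨hu, he⟩, rfl⟩
      exact ⟨he, hE' he, u, hu, w, hw, rfl⟩
  have hdisj : W.PairwiseDisjoint fun w => (s(·, w)) '' {a ∈ M | s(a, w) ∈ E'} := by
    rintro w - w' hw' hww'
    refine Set.disjoint_left.mpr ?_
    rintro _ ⟨u, ⟨hu, -⟩, rfl⟩ ⟨u', -, h⟩
    rcases Sym2.eq_iff.mp h with ⟨-, rfl⟩ | ⟨-, rfl⟩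
    · exact hww' rfl
    · exact Set.disjoint_left.mp hMW hu hw'
  rw [hunion, W.toFinite.ncard_biUnion (fun _ _ => Set.toFinite _) hdisj]
  refine finsum_mem_congr rfl fun w _ => ?_
  exact (Set.injOn_of_injective fun a b h => Sym2.congr_left.mp h).ncard_image

lemma degIn_le_ncard [Finite V] (E' : Set (Sym2 V)) (M : Set V) (v : V) :
    degIn E' M v ≤ M.ncard :=
  Set.ncard_le_ncard (Set.sep_subset _ _)

lemma sum_range_ncard_lt_degIn [Finite V] (hE' : E' ⊆ G.edgeSet) (hMW : Disjoint M W) :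
    ∑ θ ∈ range M.ncard, {w ∈ W | θ < degIn E' M w}.ncard =
      (E' ∩ edgesBetween G M W).ncard := by
  rw [sum_ncard_sep_eq_finsum_card_filter W.toFinite, ncard_inter_edgesBetween hE' hMW]
  refine finsum_mem_congr rfl fun w _ => ?_
  have := degIn_le_ncard E' M w
  rw [show {θ ∈ range M.ncard | θ < degIn E' M w} = range (degIn E' M w) by
    ext; simp only [mem_filter, mem_range]; omega, card_range]

lemma sum_range_ncard_le_degIn_add [Finite V] (hE' : E' ⊆ G.edgeSet) (hMW : Disjoint M W) :
    ∑ θ ∈ range M.ncard, {w ∈ W | M.ncard ≤ degIn E' M w + θ}.ncard =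
      (E' ∩ edgesBetween G M W).ncard := by
  rw [sum_ncard_sep_eq_finsum_card_filter W.toFinite, ncard_inter_edgesBetween hE' hMW]
  refine finsum_mem_congr rfl fun w _ => ?_
  have := degIn_le_ncard E' M w
  rw [show {θ ∈ range M.ncard | M.ncard ≤ degIn E' M w + θ} =
      Ico (M.ncard - degIn E' M w) M.ncard by
    ext; simp only [mem_filter, mem_range, mem_Ico]; omega, Nat.card_Ico]
  omega

lemma IsTriTransversal.mem_of_degIn_add_degIn_lt (hE' : IsTriTransversal G E') {A : Set V}
    {u w : V} (hu : ∀ a ∈ A, G.Adj a u) (hw : ∀ a ∈ A, G.Adj a w) (huw : G.Adj u w)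
    (hdeg : degIn E' A u + degIn E' A w < A.ncard) : s(u, w) ∈ E' := by
  classical
  obtain ⟨a, ha, hau, haw⟩ : ∃ a ∈ A, s(a, u) ∉ E' ∧ s(a, w) ∉ E' := by
    by_contra! h
    have hA : A.Finite := Set.finite_of_ncard_pos (by omega)
    have hcover : A ⊆ {a ∈ A | s(a, u) ∈ E'} ∪ {a ∈ A | s(a, w) ∈ E'} := fun a ha =>
      (em (s(a, u) ∈ E')).imp (⟨ha, ·⟩) fun hau => ⟨ha, h a ha hau⟩
    have := (Set.ncard_le_ncard hcover (hA.subset (Set.union_subset (Set.sep_subset _ _)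
      (Set.sep_subset _ _)))).trans (Set.ncard_union_le _ _)
    exact not_lt.mpr this hdeg
  exact hE'.mem_of_notMem_of_notMem (is3Clique_triple_iff.mpr ⟨hu a ha, hw a ha, huw⟩) hau haw

end degIn

section tripartite

variable {G : SimpleGraph V} {A B C : Set V} {E' : Set (Sym2 V)}

lemma IsTripartition.ncard_inter_edgesBetween_add_le [Finite V] (hpart : IsTripartition G A B C)
    (E' : Set (Sym2 V)) :
    (E' ∩ edgesBetween G A B).ncard + (E' ∩ edgesBetween G A C).ncard +
      (E' ∩ edgesBetween G B C).ncard ≤ E'.ncard := by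
  obtain ⟨-, hdAB, hdAC, hdBC, -⟩ := hpart
  have hABAC : Disjoint (edgesBetween G A B) (edgesBetween G A C) :=
    disjoint_edgesBetween_of_disjoint_right (Set.disjoint_union_right.mpr ⟨hdAB.symm, hdBC⟩)
  have hAB_BC : Disjoint (edgesBetween G A B) (edgesBetween G B C) :=
    disjoint_edgesBetween_of_disjoint_left (Set.disjoint_union_right.mpr ⟨hdAB, hdAC⟩)
  have hAC_BC : Disjoint (edgesBetween G A C) (edgesBetween G B C) :=
    disjoint_edgesBetween_of_disjoint_left (Set.disjoint_union_right.mpr ⟨hdAB, hdAC⟩)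
  rw [← Set.ncard_union_eq (hABAC.mono Set.inter_subset_right Set.inter_subset_right),
    ← Set.ncard_union_eq (Set.disjoint_union_left.mpr
      ⟨hAB_BC.mono Set.inter_subset_right Set.inter_subset_right,
        hAC_BC.mono Set.inter_subset_right Set.inter_subset_right⟩)]
  exact Set.ncard_le_ncard (Set.union_subset (Set.union_subset Set.inter_subset_left
    Set.inter_subset_left) Set.inter_subset_left)

lemma IsTriTransversal.ncard_edgesBetween_threshold_le [Finite V] (hE' : IsTriTransversal G E')
    (hAB : CompleteSide G A B) (hAC : CompleteSide G A C) (θ : ℕ) :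
    (edgesBetween G {b ∈ B | degIn E' A b ≤ θ} {c ∈ C | degIn E' A c + θ < A.ncard}).ncard ≤
      (E' ∩ edgesBetween G B C).ncard := by
  refine Set.ncard_le_ncard ?_
  rintro _ ⟨hbc, b, ⟨hb, hbθ⟩, c, ⟨hc, hcθ⟩, rfl⟩
  exact ⟨hE'.mem_of_degIn_add_degIn_lt (hAB · · b hb) (hAC · · c hc) hbc (by omega),
    hbc, b, hb, c, hc, rfl⟩

lemma IsTriTransversal.exists_le_ncard [Finite V] (hE' : IsTriTransversal G E')
    (hpart : IsTripartition G A B C) (hAB : CompleteSide G A B) (hAC : CompleteSide G A C) :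
    ∃ B'' ⊆ B, ∃ C'' ⊆ C,
      (edgesBetween G B'' C'').ncard + A.ncard * ((B \ B'').ncard + (C \ C'').ncard) ≤
        E'.ncard := by
  rcases Nat.eq_zero_or_pos A.ncard with hp | hp
  · exact ⟨∅, Set.empty_subset _, ∅, Set.empty_subset _, by simp [hp, edgesBetween]⟩
  set p := A.ncard
  set d := degIn E' A
  have hsplit (θ : ℕ) : (B \ {b ∈ B | d b ≤ θ}).ncard + (C \ {c ∈ C | d c + θ < p}).ncard =
      {b ∈ B | θ < d b}.ncard + {c ∈ C | p ≤ d c + θ}.ncard := by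
    congr 2 <;> ext <;> simp +contextual [not_le]
  have hsum : ∑ θ ∈ range p, ((edgesBetween G {b ∈ B | d b ≤ θ} {c ∈ C | d c + θ < p}).ncard +
      p * ((B \ {b ∈ B | d b ≤ θ}).ncard + (C \ {c ∈ C | d c + θ < p}).ncard)) ≤
      ∑ θ ∈ range p, E'.ncard := calc
    _ ≤ ∑ θ ∈ range p, ((E' ∩ edgesBetween G B C).ncard +
          p * ({b ∈ B | θ < d b}.ncard + {c ∈ C | p ≤ d c + θ}.ncard)) :=
      sum_le_sum fun θ _ => hsplit θ ▸ Nat.add_le_add_right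
        (hE'.ncard_edgesBetween_threshold_le hAB hAC θ) _
    _ = p * ((E' ∩ edgesBetween G A B).ncard + (E' ∩ edgesBetween G A C).ncard +
          (E' ∩ edgesBetween G B C).ncard) := by
      rw [sum_add_distrib, ← mul_sum, sum_add_distrib,
        sum_range_ncard_lt_degIn hE'.1 hpart.2.1, sum_range_ncard_le_degIn_add hE'.1 hpart.2.2.1,
        sum_const, card_range, smul_eq_mul]
      ring
    _ ≤ ∑ θ ∈ range p, E'.ncard := by
      rw [sum_const, card_range, smul_eq_mul]
      exact Nat.mul_le_mul_left p (hpart.ncard_inter_edgesBetween_add_le E')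
  obtain ⟨θ, -, hθ⟩ := exists_le_of_sum_le (nonempty_range_iff.mpr hp.ne') hsum
  exact ⟨_, Set.sep_subset _ _, _, Set.sep_subset _ _, hθ⟩

end tripartite

/-- For a bilaterally-complete tripartite graph `G` with complete sides `G[A∪B]`,
`G[A∪C]` and `|A| = p`, `τ△(G)` equals the minimum over all `B'' ⊆ B` and `C'' ⊆ C`
of `|E_{B''C''}| + p·(|B| + |C| − |B''| − |C''|)`. -/
theorem tau_eq_min_maoCheng_formula [Fintype V] (G : SimpleGraph V)
    (A B C : Set V) (hpart : IsTripartition G A B C)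
    (hAB : CompleteSide G A B) (hAC : CompleteSide G A C)
    (p : ℕ) (hp : A.ncard = p) :
    triTransversalNum G =
      sInf {n : ℕ | ∃ B'' ⊆ B, ∃ C'' ⊆ C,
        n = (edgesBetween G B'' C'').ncard +
              p * (B.ncard + C.ncard - B''.ncard - C''.ncard)} := by
  subst hp
  rw [triTransversalNum]
  apply le_antisymm
  · refine le_csInf ⟨_, ∅, Set.empty_subset _, ∅, Set.empty_subset _, rfl⟩ ?_
    rintro _ ⟨B'', hB'', C'', hC'', rfl⟩
    refine Nat.sInf_le ⟨_, isTriTransversal_tripartiteTransversal hpart B'' C'', ?_⟩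
    rw [ncard_tripartiteTransversal hpart hAB hAC B'' hC'',
      ncard_add_ncard_sub_ncard_sub_ncard hB'' hC'']
  · have hne : {n | ∃ E' : Set (Sym2 V), IsTriTransversal G E' ∧ E'.ncard = n}.Nonempty :=
      ⟨_, _, isTriTransversal_tripartiteTransversal hpart ∅ ∅, rfl⟩
    obtain ⟨E', hE', hcard⟩ := Nat.sInf_mem hne
    obtain ⟨B'', hB'', C'', hC'', hle⟩ := hE'.exists_le_ncard hpart hAB hAC
    refine le_trans (Nat.sInf_le ⟨B'', hB'', C'', hC'', rfl⟩) ?_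
    rw [ncard_add_ncard_sub_ncard_sub_ncard hB'' hC'', ← hcard]
    exact hle
end

section
/- Let G = (A,B,C;E) be a bilaterally-complete tripartite graph with complete sides G[A∪B] and G[A∪C]. For any B″ ⊆ B and C″ ⊆ C, setting B′ = B \ B″, C′ = C \ C″ and W = B′ ∪ C′, the set W is a vertex cover of the subgraph of G edge-induced by E_BC \ E_{B″C″}, and E_{B″C″} ∪ E_{AW} is a uniform 𝒯-transversal of G of cardinality |E_{B″C″}| + |A|·|W|. -/
open SimpleGraph

variable {V : Type*}

/-- For any `B'' ⊆ B` and `C'' ⊆ C` in a bilaterally-complete tripartite graph `G`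
with complete sides `G[A∪B]` and `G[A∪C]`, setting `W = (B \ B'') ∪ (C \ C'')`, the
set `W` is a vertex cover of the subgraph edge-induced by `E_BC \ E_{B''C''}`, and
`E_{B''C''} ∪ E_{A,W}` is a (uniform) `𝒯`-transversal of `G` of cardinality
`|E_{B''C''}| + |A|·|W|`. -/
theorem uniform_transversal_of_subsets [Fintype V] (G : SimpleGraph V)
    (A B C : Set V) (hpart : IsTripartition G A B C)
    (hAB : CompleteSide G A B) (hAC : CompleteSide G A C)
    (B'' C'' : Set V) (hB'' : B'' ⊆ B) (hC'' : C'' ⊆ C) :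
    CoversEdges ((B \ B'') ∪ (C \ C''))
        (edgesBetween G B C \ edgesBetween G B'' C'') ∧
      IsTriTransversal G
        (edgesBetween G B'' C'' ∪ edgesBetween G A ((B \ B'') ∪ (C \ C''))) ∧
      (edgesBetween G B'' C'' ∪ edgesBetween G A ((B \ B'') ∪ (C \ C''))).ncard =
        (edgesBetween G B'' C'').ncard + A.ncard * ((B \ B'') ∪ (C \ C'')).ncard := by
  classical
  obtain ⟨hcover, hdAB, hdAC, hdBC, hIA, hIB, hIC⟩ := hpart
  set W : Set V := (B \ B'') ∪ (C \ C'') with hW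
  have hWsub : W ⊆ B ∪ C :=
    Set.union_subset_union Set.diff_subset Set.diff_subset
  have hAWdis : Disjoint A W :=
    Set.disjoint_union_right.2
      ⟨hdAB.mono_right Set.diff_subset, hdAC.mono_right Set.diff_subset⟩
  have hmem : ∀ v : V, v ∈ A ∨ v ∈ B ∨ v ∈ C := by
    intro v
    have : v ∈ A ∪ B ∪ C := hcover ▸ Set.mem_univ v
    simpa [Set.mem_union, or_assoc] using this
  refine ⟨?_, ⟨?_, ?_⟩, ?_⟩
  · -- CoversEdges
    rintro e ⟨⟨he, u, hu, w, hw, rfl⟩, hne⟩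
    by_cases huB : u ∈ B''
    · refine ⟨w, Or.inr ⟨hw, fun hwC => ?_⟩, by simp⟩
      exact hne ⟨he, u, huB, w, hwC, rfl⟩
    · exact ⟨u, Or.inl ⟨hu, huB⟩, by simp⟩
  · -- subset of edgeSet
    rintro e (⟨he, -⟩ | ⟨he, -⟩) <;> exact he
  · -- hits every triangle
    intro t ht
    rw [is3Clique_iff] at ht
    obtain ⟨a, b, c, hab, hac, hbc, rfl⟩ := ht
    have hat : a ∈ ({a, b, c} : Finset V) := by simp
    have hbt : b ∈ ({a, b, c} : Finset V) := by simp
    have hct : c ∈ ({a, b, c} : Finset V) := by simp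
    have key : ∀ x y z : V, x ∈ ({a,b,c} : Finset V) → y ∈ ({a,b,c} : Finset V) →
        z ∈ ({a,b,c} : Finset V) → x ∈ A → y ∈ B → z ∈ C →
        G.Adj x y → G.Adj x z → G.Adj y z →
        ∃ e ∈ triangleEdges ({a,b,c} : Finset V),
          e ∈ edgesBetween G B'' C'' ∪ edgesBetween G A W := by
      intro x y z hxt hyt hzt hxA hyB hzC hxy hxz hyz
      by_cases hy : y ∈ B''
      · by_cases hz : z ∈ C''
        · exact ⟨s(y, z), ⟨y, hyt, z, hzt, hyz.ne, rfl⟩,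
            Or.inl ⟨G.mem_edgeSet.2 hyz, y, hy, z, hz, rfl⟩⟩
        · exact ⟨s(x, z), ⟨x, hxt, z, hzt, hxz.ne, rfl⟩,
            Or.inr ⟨G.mem_edgeSet.2 hxz, x, hxA, z, Or.inr ⟨hzC, hz⟩, rfl⟩⟩
      · exact ⟨s(x, y), ⟨x, hxt, y, hyt, hxy.ne, rfl⟩,
          Or.inr ⟨G.mem_edgeSet.2 hxy, x, hxA, y, Or.inl ⟨hyB, hy⟩, rfl⟩⟩
    rcases hmem a with ha | ha | ha <;> rcases hmem b with hb | hb | hb <;>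
      rcases hmem c with hc | hc | hc <;>
    first
      | exact absurd hab (hIA a ha b hb)
      | exact absurd hab (hIB a ha b hb)
      | exact absurd hab (hIC a ha b hb)
      | exact absurd hac (hIA a ha c hc)
      | exact absurd hac (hIB a ha c hc)
      | exact absurd hac (hIC a ha c hc)
      | exact absurd hbc (hIA b hb c hc)
      | exact absurd hbc (hIB b hb c hc)
      | exact absurd hbc (hIC b hb c hc)
      | exact key a b c hat hbt hct ha hb hc hab hac hbc
      | exact key a c b hat hct hbt ha hc hb hac hab hbc.symm
      | exact key b a c hbt hat hct hb ha hc hab.symm hbc hac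
      | exact key b c a hbt hct hat hb hc ha hbc hab.symm hac.symm
      | exact key c a b hct hat hbt hc ha hb hac.symm hbc.symm hab
      | exact key c b a hct hbt hat hc hb ha hbc.symm hac.symm hab.symm
  · -- cardinality
    have hAWeq : edgesBetween G A W = (fun p : V × V => s(p.1, p.2)) '' (A ×ˢ W) := by
      ext e
      constructor
      · rintro ⟨he, u, hu, w, hw, rfl⟩
        exact ⟨(u, w), ⟨hu, hw⟩, rfl⟩
      · rintro ⟨⟨u, w⟩, ⟨hu, hw⟩, rfl⟩
        refine ⟨?_, u, hu, w, hw, rfl⟩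
        rcases hWsub hw with h | h
        · exact G.mem_edgeSet.2 (hAB u hu w h)
        · exact G.mem_edgeSet.2 (hAC u hu w h)
    have hinj : Set.InjOn (fun p : V × V => s(p.1, p.2)) (A ×ˢ W) := by
      rintro ⟨u, w⟩ hp ⟨u', w'⟩ hq h
      simp only [Set.mem_prod] at hp hq
      simp only [Sym2.eq, Sym2.rel_iff', Prod.mk.injEq, Prod.swap_prod_mk] at h
      rcases h with ⟨h1, h2⟩ | ⟨h1, h2⟩
      · simp [h1, h2]
      · exact absurd hq.2 (Set.disjoint_left.1 hAWdis (h1 ▸ hp.1))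
    have hdisj : Disjoint (edgesBetween G B'' C'') (edgesBetween G A W) := by
      rw [Set.disjoint_left]
      rintro e ⟨-, u, hu, w, hw, rfl⟩ ⟨-, x, hx, y, hy, hxy⟩
      have hx' : x ∈ A := hx
      rw [Sym2.eq, Sym2.rel_iff', Prod.mk.injEq, Prod.swap_prod_mk] at hxy
      rcases hxy with ⟨rfl, rfl⟩ | ⟨rfl, rfl⟩
      · exact Set.disjoint_left.1 hdAB hx' (hB'' hu)
      · exact Set.disjoint_left.1 hdAC hx' (hC'' hw)
    rw [Set.ncard_union_eq hdisj (Set.toFinite _) (Set.toFinite _), hAWeq,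
      Set.ncard_image_of_injOn hinj]
    congr 1
    rw [Set.ncard_eq_toFinset_card', Set.ncard_eq_toFinset_card' A,
      Set.ncard_eq_toFinset_card' W, Set.toFinset_prod, Finset.card_product]
end

section
/- If G is a complete tripartite graph (all three sides are complete bipartite graphs), then τ△(G) = ν△(G). -/
open SimpleGraph

variable {V : Type*}

/- ### Auxiliary lemmas -/

lemma edgeDisjoint_of_no_shared_pair (t t' : Finset V)
    (h : ∀ u v : V, u ≠ v → u ∈ t → v ∈ t → u ∈ t' → v ∈ t' → False) :
    Disjoint (triangleEdges t) (triangleEdges t') := by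
  rw [Set.disjoint_left]
  rintro e ⟨u, hu, v, hv, huv, rfl⟩ ⟨u', hu', v', hv', huv', he⟩
  rcases Sym2.eq_iff.mp he with ⟨rfl, rfl⟩ | ⟨rfl, rfl⟩
  · exact h u v huv hu hv hu' hv'
  · exact h u v huv hu hv hv' hu'

lemma packing_ncard_le [Fintype V] (G : SimpleGraph V) {P : Set (Finset V)}
    {E' : Set (Sym2 V)} (hP : IsTriPacking G P) (hE : IsTriTransversal G E') :
    P.ncard ≤ E'.ncard := by
  classical
  rcases P.eq_empty_or_nonempty with rfl | ⟨t0, ht0⟩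
  · simp
  have hVne : Nonempty V := by
    have h3 := (hP.1 t0 ht0).2
    rcases Finset.card_eq_three.mp h3 with ⟨a, b, c, -, -, -, -⟩
    exact ⟨a⟩
  have h : ∀ t : Finset V, ∃ e : Sym2 V, t ∈ P → e ∈ triangleEdges t ∧ e ∈ E' := by
    intro t
    by_cases ht : t ∈ P
    · obtain ⟨e, he1, he2⟩ := hE.2 t (hP.1 t ht)
      exact ⟨e, fun _ => ⟨he1, he2⟩⟩
    · exact ⟨s(Classical.arbitrary V, Classical.arbitrary V), fun h => absurd h ht⟩
  choose f hf using h
  have hinj : Set.InjOn f P := by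
    intro t ht t' ht' hff
    by_contra hne
    have hdis := hP.2 ht ht' hne
    exact Set.disjoint_left.mp hdis (hf t ht).1 (hff ▸ (hf t' ht').1)
  calc P.ncard = (f '' P).ncard := (Set.ncard_image_of_injOn hinj).symm
    _ ≤ E'.ncard := Set.ncard_le_ncard
        (by rintro e ⟨t, ht, rfl⟩; exact (hf t ht).2) (Set.toFinite E')

lemma nu_le_tau [Fintype V] (G : SimpleGraph V) :
    triPackingNum G ≤ triTransversalNum G := by
  classical
  have hTne : {n | ∃ E' : Set (Sym2 V), IsTriTransversal G E' ∧ E'.ncard = n}.Nonempty := by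
    refine ⟨G.edgeSet.ncard, G.edgeSet, ⟨subset_rfl, ?_⟩, rfl⟩
    intro t ht
    have h2 : 1 < t.card := by rw [ht.2]; norm_num
    obtain ⟨a, ha, b, hb, hab⟩ := Finset.one_lt_card.mp h2
    exact ⟨s(a, b), ⟨a, ha, b, hb, hab, rfl⟩,
      G.mem_edgeSet.mpr (ht.1 (Finset.mem_coe.mpr ha) (Finset.mem_coe.mpr hb) hab)⟩
  obtain ⟨Emin, hEmin, hcard⟩ := Nat.sInf_mem hTne
  refine csSup_le ⟨0, ∅, ⟨fun t ht => absurd ht (Set.notMem_empty t),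
    Set.pairwise_empty _⟩, by simp⟩ ?_
  rintro n ⟨P, hP, rfl⟩
  calc P.ncard ≤ Emin.ncard := packing_ncard_le G hP hEmin
    _ = triTransversalNum G := hcard

lemma triangle_reps {G : SimpleGraph V} {A B C : Set V}
    (hpart : IsTripartition G A B C) {t : Finset V} (ht : G.IsNClique 3 t) :
    (∃ x, x ∈ A ∧ x ∈ t) ∧ (∃ y, y ∈ B ∧ y ∈ t) ∧ (∃ z, z ∈ C ∧ z ∈ t) := by
  classical
  obtain ⟨hun, dAB, dAC, dBC, nAA, nBB, nCC⟩ := hpart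
  obtain ⟨u, v, w, huv, huw, hvw, rfl⟩ := Finset.card_eq_three.mp ht.2
  have hut : u ∈ ({u, v, w} : Finset V) := by simp
  have hvt : v ∈ ({u, v, w} : Finset V) := by simp
  have hwt : w ∈ ({u, v, w} : Finset V) := by simp
  have auv : G.Adj u v := ht.1 (Finset.mem_coe.mpr hut) (Finset.mem_coe.mpr hvt) huv
  have auw : G.Adj u w := ht.1 (Finset.mem_coe.mpr hut) (Finset.mem_coe.mpr hwt) huw
  have avw : G.Adj v w := ht.1 (Finset.mem_coe.mpr hvt) (Finset.mem_coe.mpr hwt) hvw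
  have hu : u ∈ A ∪ B ∪ C := by rw [hun]; trivial
  have hv : v ∈ A ∪ B ∪ C := by rw [hun]; trivial
  have hw : w ∈ A ∪ B ∪ C := by rw [hun]; trivial
  simp only [Set.mem_union] at hu hv hw
  rcases hu with (hu | hu) | hu <;> rcases hv with (hv | hv) | hv <;>
    rcases hw with (hw | hw) | hw <;>
    first
      | exact ⟨⟨u, hu, hut⟩, ⟨v, hv, hvt⟩, ⟨w, hw, hwt⟩⟩
      | exact ⟨⟨u, hu, hut⟩, ⟨w, hw, hwt⟩, ⟨v, hv, hvt⟩⟩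
      | exact ⟨⟨v, hv, hvt⟩, ⟨u, hu, hut⟩, ⟨w, hw, hwt⟩⟩
      | exact ⟨⟨v, hv, hvt⟩, ⟨w, hw, hwt⟩, ⟨u, hu, hut⟩⟩
      | exact ⟨⟨w, hw, hwt⟩, ⟨u, hu, hut⟩, ⟨v, hv, hvt⟩⟩
      | exact ⟨⟨w, hw, hwt⟩, ⟨v, hv, hvt⟩, ⟨u, hu, hut⟩⟩
      | exact absurd auv (nAA u hu v hv)
      | exact absurd auw (nAA u hu w hw)
      | exact absurd avw (nAA v hv w hw)
      | exact absurd auv (nBB u hu v hv)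
      | exact absurd auw (nBB u hu w hw)
      | exact absurd avw (nBB v hv w hw)
      | exact absurd auv (nCC u hu v hv)
      | exact absurd auw (nCC u hu w hw)
      | exact absurd avw (nCC v hv w hw)

lemma key_case [Fintype V] (G : SimpleGraph V) (A B C : Set V)
    (hpart : IsTripartition G A B C) (hAB : CompleteSide G A B)
    (hAC : CompleteSide G A C) (hBC : CompleteSide G B C)
    (hA : Nat.card ↥A ≤ Nat.card ↥C) (hB : Nat.card ↥B ≤ Nat.card ↥C) :
    triTransversalNum G = triPackingNum G := by
  classical
  obtain ⟨hun, dAB, dAC, dBC, nAA, nBB, nCC⟩ := hpart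
  have hpart' : IsTripartition G A B C := ⟨hun, dAB, dAC, dBC, nAA, nBB, nCC⟩
  have hd : ∀ {x y : V} {S T' : Set V}, Disjoint S T' → x ∈ S → y ∈ T' → x ≠ y :=
    fun hdis hx hy hxy => Set.disjoint_left.mp hdis hx (hxy ▸ hy)
  -- the transversal
  have hE0 : IsTriTransversal G (edgesBetween G A B) := by
    refine ⟨fun e he => he.1, fun t ht => ?_⟩
    obtain ⟨⟨x, hxA, hxt⟩, ⟨y, hyB, hyt⟩, -⟩ := triangle_reps hpart' ht
    exact ⟨s(x, y), ⟨x, hxt, y, hyt, hd dAB hxA hyB, rfl⟩,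
      ⟨G.mem_edgeSet.mpr (hAB x hxA y hyB), x, hxA, y, hyB, rfl⟩⟩
  have hE0card : (edgesBetween G A B).ncard = Nat.card ↥A * Nat.card ↥B := by
    have heq : edgesBetween G A B =
        Set.range (fun p : ↥A × ↥B => s((p.1 : V), (p.2 : V))) := by
      ext e
      constructor
      · rintro ⟨he, u, hu, w, hw, rfl⟩
        exact ⟨(⟨u, hu⟩, ⟨w, hw⟩), rfl⟩
      · rintro ⟨⟨x, y⟩, rfl⟩
        exact ⟨G.mem_edgeSet.mpr (hAB x x.2 y y.2), x, x.2, y, y.2, rfl⟩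
    have hinj : Function.Injective (fun p : ↥A × ↥B => s((p.1 : V), (p.2 : V))) := by
      rintro ⟨x, y⟩ ⟨x', y'⟩ h
      rcases Sym2.eq_iff.mp h with ⟨h1, h2⟩ | ⟨h1, h2⟩
      · exact Prod.ext (Subtype.ext h1) (Subtype.ext h2)
      · exact absurd h1 (hd dAB x.2 y'.2)
    rw [heq, ← Nat.card_coe_set_eq, Nat.card_range_of_injective hinj, Nat.card_prod]
  rcases Nat.eq_zero_or_pos (Nat.card ↥C) with hc | hc
  · -- degenerate case: everything is empty
    have hA0 : Nat.card ↥A = 0 := le_antisymm (hc ▸ hA) (Nat.zero_le _)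
    have hτ : triTransversalNum G ≤ 0 :=
      Nat.sInf_le ⟨edgesBetween G A B, hE0, by rw [hE0card, hA0, zero_mul]⟩
    have hν := nu_le_tau G
    omega
  · haveI : NeZero (Nat.card ↥C) := ⟨hc.ne'⟩
    haveI : Fintype ↥A := Fintype.ofFinite _
    haveI : Fintype ↥B := Fintype.ofFinite _
    haveI : Fintype ↥C := Fintype.ofFinite _
    obtain ⟨fA⟩ : Nonempty (↥A ↪ ZMod (Nat.card ↥C)) :=
      Function.Embedding.nonempty_of_card_le
        (by rw [ZMod.card, ← Nat.card_eq_fintype_card]; exact hA)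
    obtain ⟨fB⟩ : Nonempty (↥B ↪ ZMod (Nat.card ↥C)) :=
      Function.Embedding.nonempty_of_card_le
        (by rw [ZMod.card, ← Nat.card_eq_fintype_card]; exact hB)
    let eC : ↥C ≃ ZMod (Nat.card ↥C) :=
      Fintype.equivOfCardEq (by rw [ZMod.card, Nat.card_eq_fintype_card])
    set gC : ↥A × ↥B → ↥C := fun p => eC.symm (fA p.1 + fB p.2) with hgC
    set T : ↥A × ↥B → Finset V := fun p => {(p.1 : V), (p.2 : V), (gC p : V)} with hT
    have hmemT : ∀ (p : ↥A × ↥B) (u : V),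
        u ∈ T p ↔ u = ↑p.1 ∨ u = ↑p.2 ∨ u = ↑(gC p) := by
      intro p u; simp [hT]
    have hg : ∀ p q : ↥A × ↥B, (gC p : V) = ↑(gC q) →
        fA p.1 + fB p.2 = fA q.1 + fB q.2 := by
      intro p q h
      exact eC.symm.injective (Subtype.ext h)
    have hshare : ∀ p q : ↥A × ↥B, ∀ u v : V, u ≠ v → u ∈ T p → u ∈ T q →
        v ∈ T p → v ∈ T q → p = q := by
      have slot : ∀ (p q : ↥A × ↥B) (u : V), u ∈ T p → u ∈ T q →
          (u = ↑p.1 ∧ u = ↑q.1) ∨ (u = ↑p.2 ∧ u = ↑q.2) ∨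
            (u = ↑(gC p) ∧ u = ↑(gC q)) := by
        intro p q u hp hq
        rw [hmemT] at hp hq
        rcases hp with h1 | h1 | h1 <;> rcases hq with h2 | h2 | h2
        · exact Or.inl ⟨h1, h2⟩
        · exact absurd (h1.symm.trans h2) (hd dAB p.1.2 q.2.2)
        · exact absurd (h1.symm.trans h2) (hd dAC p.1.2 (gC q).2)
        · exact absurd (h2.symm.trans h1) (hd dAB q.1.2 p.2.2)
        · exact Or.inr (Or.inl ⟨h1, h2⟩)
        · exact absurd (h1.symm.trans h2) (hd dBC p.2.2 (gC q).2)
        · exact absurd (h2.symm.trans h1) (hd dAC q.1.2 (gC p).2)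
        · exact absurd (h2.symm.trans h1) (hd dBC q.2.2 (gC p).2)
        · exact Or.inr (Or.inr ⟨h1, h2⟩)
      intro p q u v huv hup huq hvp hvq
      rcases slot p q u hup huq with ⟨hu1, hu2⟩ | ⟨hu1, hu2⟩ | ⟨hu1, hu2⟩ <;>
        rcases slot p q v hvp hvq with ⟨hv1, hv2⟩ | ⟨hv1, hv2⟩ | ⟨hv1, hv2⟩
      · exact absurd (hu1.trans hv1.symm) huv
      · -- A and B slots
        exact Prod.ext (Subtype.ext (hu1.symm.trans hu2)) (Subtype.ext (hv1.symm.trans hv2))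
      · -- A and C slots
        have h1 : p.1 = q.1 := Subtype.ext (hu1.symm.trans hu2)
        have h2 := hg p q (hv1.symm.trans hv2)
        rw [h1] at h2
        have h3 : p.2 = q.2 := fB.injective (add_left_cancel h2)
        exact Prod.ext h1 h3
      · exact Prod.ext (Subtype.ext (hv1.symm.trans hv2)) (Subtype.ext (hu1.symm.trans hu2))
      · exact absurd (hu1.trans hv1.symm) huv
      · -- B and C slots
        have h1 : p.2 = q.2 := Subtype.ext (hu1.symm.trans hu2)
        have h2 := hg p q (hv1.symm.trans hv2)
        rw [h1] at h2
        have h3 : p.1 = q.1 := fA.injective (add_right_cancel h2)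
        exact Prod.ext h3 h1
      · have h1 : p.1 = q.1 := Subtype.ext (hv1.symm.trans hv2)
        have h2 := hg p q (hu1.symm.trans hu2)
        rw [h1] at h2
        exact Prod.ext h1 (fB.injective (add_left_cancel h2))
      · have h1 : p.2 = q.2 := Subtype.ext (hv1.symm.trans hv2)
        have h2 := hg p q (hu1.symm.trans hu2)
        rw [h1] at h2
        exact Prod.ext (fA.injective (add_right_cancel h2)) h1
      · exact absurd (hu1.trans hv1.symm) huv
    have hmem1 : ∀ p : ↥A × ↥B, (↑p.1 : V) ∈ T p := fun p => by simp [hT]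
    have hmem2 : ∀ p : ↥A × ↥B, (↑p.2 : V) ∈ T p := fun p => by simp [hT]
    have hTinj : Function.Injective T := by
      intro p q h
      exact hshare p q ↑p.1 ↑p.2 (hd dAB p.1.2 p.2.2) (hmem1 p) (h ▸ hmem1 p)
        (hmem2 p) (h ▸ hmem2 p)
    have hclique : ∀ p : ↥A × ↥B, G.IsNClique 3 (T p) := fun p =>
      is3Clique_triple_iff.mpr
        ⟨hAB _ p.1.2 _ p.2.2, hAC _ p.1.2 _ (gC p).2, hBC _ p.2.2 _ (gC p).2⟩
    have hPack : IsTriPacking G (Set.range T) := by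
      constructor
      · rintro t ⟨p, rfl⟩; exact hclique p
      · rintro t ⟨p, rfl⟩ t' ⟨q, rfl⟩ hne
        refine edgeDisjoint_of_no_shared_pair _ _ fun u v huv hut hvt hut' hvt' => ?_
        exact hne (congrArg T (hshare p q u v huv hut hut' hvt hvt'))
    have hPcard : (Set.range T).ncard = Nat.card ↥A * Nat.card ↥B := by
      rw [← Nat.card_coe_set_eq, Nat.card_range_of_injective hTinj, Nat.card_prod]
    have h1 : triTransversalNum G ≤ Nat.card ↥A * Nat.card ↥B :=
      Nat.sInf_le ⟨edgesBetween G A B, hE0, hE0card⟩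
    have hbdd : BddAbove {n | ∃ P : Set (Finset V), IsTriPacking G P ∧ P.ncard = n} := by
      refine ⟨Nat.card (Finset V), ?_⟩
      rintro n ⟨P, hP, rfl⟩
      calc P.ncard ≤ (Set.univ : Set (Finset V)).ncard :=
            Set.ncard_le_ncard (Set.subset_univ P) Set.finite_univ
        _ = Nat.card (Finset V) := Set.ncard_univ _
    have h2 : Nat.card ↥A * Nat.card ↥B ≤ triPackingNum G :=
      le_csSup hbdd ⟨Set.range T, hPack, hPcard⟩
    have h3 := nu_le_tau G
    omega

lemma tripartition_swap12 {G : SimpleGraph V} {A B C : Set V}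
    (h : IsTripartition G A B C) : IsTripartition G B A C := by
  obtain ⟨hun, dAB, dAC, dBC, nAA, nBB, nCC⟩ := h
  exact ⟨by rw [Set.union_comm B A]; exact hun, dAB.symm, dBC, dAC, nBB, nAA, nCC⟩

lemma tripartition_swap23 {G : SimpleGraph V} {A B C : Set V}
    (h : IsTripartition G A B C) : IsTripartition G A C B := by
  obtain ⟨hun, dAB, dAC, dBC, nAA, nBB, nCC⟩ := h
  exact ⟨by rw [Set.union_right_comm]; exact hun, dAC, dAB, dBC.symm, nAA, nCC, nBB⟩

lemma completeSide_symm {G : SimpleGraph V} {X Y : Set V}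
    (h : CompleteSide G X Y) : CompleteSide G Y X :=
  fun y hy x hx => (h x hx y hy).symm

/-- If `G` is a complete tripartite graph (all three sides are complete bipartite
graphs), then `τ△(G) = ν△(G)`. -/
theorem tau_eq_nu_of_completeTripartite [Fintype V] (G : SimpleGraph V)
    (A B C : Set V) (hpart : IsTripartition G A B C)
    (hAB : CompleteSide G A B) (hAC : CompleteSide G A C)
    (hBC : CompleteSide G B C) :
    triTransversalNum G = triPackingNum G := by
  rcases le_total (Nat.card ↥A) (Nat.card ↥C) with hac | hca
  · rcases le_total (Nat.card ↥B) (Nat.card ↥C) with hbc | hcb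
    · exact key_case G A B C hpart hAB hAC hBC hac hbc
    · -- B is largest : use (A, C, B)
      exact key_case G A C B (tripartition_swap23 hpart) hAC hAB
        (completeSide_symm hBC) (hac.trans hcb) hcb
  · rcases le_total (Nat.card ↥B) (Nat.card ↥C) with hbc | hcb
    · -- A is largest : use (B, C, A)
      exact key_case G B C A (tripartition_swap23 (tripartition_swap12 hpart))
        hBC (completeSide_symm hAB) (completeSide_symm hAC) (hbc.trans hca) hca
    · rcases le_total (Nat.card ↥A) (Nat.card ↥B) with hab | hba
      · -- B largest
        exact key_case G A C B (tripartition_swap23 hpart) hAC hAB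
          (completeSide_symm hBC) hab hcb
      · -- A largest
        exact key_case G B C A (tripartition_swap23 (tripartition_swap12 hpart))
          hBC (completeSide_symm hAB) (completeSide_symm hAC) hba hca
end
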